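/- arXiv:math/9405202 — 12 statements merged into one kernel-verified Lean document; each statement's English description precedes it below -/
import Mathlib

section
/- Let 𝒳 be a family of closed subsets of Baire space ℕ → ℕ (with the product topology) whose union is all of ℕ → ℕ. Then either some countable subfamily of 𝒳 already covers ℕ → ℕ, or the cardinality of 𝒳 is at least cov(ℳ), the covering number of the meager ideal of ℕ → ℕ. In particular, every Π⁰₁-characteristic (an uncountable cardinal κ for which some family of κ closed subsets of ℕ → ℕ covers ℕ → ℕ while no subfamily of cardinality < κ does) is at least cov(ℳ). -/
/-!
Call a point good if some neighbourhood of it is covered by countably many members of `𝒳`.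
The good points form an open set which, being Lindelöf, is itself covered by countably many
members of `𝒳`. If some point is bad, the bad points form a nonempty closed set `C` in which no
member of `𝒳` contains a nonempty relatively open piece of `C`, so the traces of the closed sets
of `𝒳` are nowhere dense in `C`. Baire space maps continuously and openly into `C`: read the
digits of `x` and copy each one as long as the resulting cylinder still meets `C`. Pulling the
traces back along this map covers Baire space by at most `#𝒳` nowhere dense sets.
-/

open Cardinal Set

/-- The covering number of the meager ideal of a topological space:
the least cardinality of a family of meager sets covering the space. -/
noncomputable def covMeager (X : Type) [TopologicalSpace X] : Cardinal :=
  sInf {c : Cardinal | ∃ F : Set (Set X),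
    (∀ s ∈ F, IsMeagre s) ∧ ⋃₀ F = Set.univ ∧ c = #F}

open Topology

section CountableSubcoverLocus

variable {X : Type*} [TopologicalSpace X]

def countableSubcoverLocus (𝒳 : Set (Set X)) : Set X :=
  {x | ∃ V ∈ 𝓝 x, ∃ 𝒢 ⊆ 𝒳, 𝒢.Countable ∧ V ⊆ ⋃₀ 𝒢}

variable {𝒳 : Set (Set X)}

theorem isOpen_countableSubcoverLocus : IsOpen (countableSubcoverLocus 𝒳) := by
  refine isOpen_iff_mem_nhds.2 fun x ⟨V, hV, hcover⟩ => ?_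
  filter_upwards [eventually_mem_nhds_iff.2 hV] with y hy using ⟨V, hy, hcover⟩

theorem exists_countable_subcover_countableSubcoverLocus [HereditarilyLindelofSpace X] :
    ∃ 𝒢 ⊆ 𝒳, 𝒢.Countable ∧ countableSubcoverLocus 𝒳 ⊆ ⋃₀ 𝒢 := by
  choose! V hV 𝒢 h𝒢𝒳 h𝒢c hV𝒢 using fun x (hx : x ∈ countableSubcoverLocus 𝒳) => hx
  obtain ⟨t, htc, hts, hcover⟩ :=
    (HereditarilyLindelofSpace.isLindelof (countableSubcoverLocus 𝒳)).elim_nhds_subcover V hV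
  refine ⟨⋃ x ∈ t, 𝒢 x, iUnion₂_subset fun x hx => h𝒢𝒳 x (hts x hx),
    htc.biUnion fun x hx => h𝒢c x (hts x hx), fun y hy => ?_⟩
  obtain ⟨x, hx, hyx⟩ := mem_iUnion₂.1 (hcover hy)
  exact sUnion_mono (subset_biUnion_of_mem hx) (hV𝒢 x (hts x hx) hyx)

theorem subset_countableSubcoverLocus [HereditarilyLindelofSpace X] {V A : Set X}
    (hV : IsOpen V) (hA : A ∈ 𝒳) (hVA : V ∩ (countableSubcoverLocus 𝒳)ᶜ ⊆ A) :
    V ⊆ countableSubcoverLocus 𝒳 := by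
  obtain ⟨𝒢, h𝒢𝒳, h𝒢c, hcover⟩ := exists_countable_subcover_countableSubcoverLocus (𝒳 := 𝒳)
  refine fun x hx => ⟨V, hV.mem_nhds hx, insert A 𝒢, insert_subset hA h𝒢𝒳, h𝒢c.insert A,
    fun y hy => ?_⟩
  by_cases hy' : y ∈ countableSubcoverLocus 𝒳
  · exact sUnion_mono (subset_insert A 𝒢) (hcover hy')
  · exact ⟨A, mem_insert A 𝒢, hVA ⟨hy, hy'⟩⟩

theorem isNowhereDense_preimage_val_compl_countableSubcoverLocus [HereditarilyLindelofSpace X]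
    {A : Set X} (hA : A ∈ 𝒳) (hAc : IsClosed A) :
    IsNowhereDense ((↑) ⁻¹' A : Set ↥((countableSubcoverLocus 𝒳)ᶜ)) := by
  rw [(hAc.preimage continuous_subtype_val).isNowhereDense_iff, ← subset_empty_iff]
  rintro ⟨x, hx⟩ hint
  obtain ⟨W, hWA, hW, hxW⟩ := mem_interior.1 hint
  obtain ⟨V, hV, rfl⟩ := isOpen_induced_iff.1 hW
  have hVA : V ∩ (countableSubcoverLocus 𝒳)ᶜ ⊆ A := fun y ⟨hyV, hy⟩ =>
    hWA (show (⟨y, hy⟩ : ↥((countableSubcoverLocus 𝒳)ᶜ)) ∈ (↑) ⁻¹' V from hyV)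
  exact hx (subset_countableSubcoverLocus hV hA hVA hxW)

end CountableSubcoverLocus

namespace PiNat

variable {E : ℕ → Type*} (C : Set (∀ n, E n)) (c : ∀ n, E n)

open scoped Classical in
/-- `toClosedSeq C c x n` is a point of `C` whose first `n` coordinates are the node of the tree of
`C` reached after reading `n` digits of `x`; `c` is the starting point. -/
noncomputable def toClosedSeq (x : ∀ n, E n) : ℕ → ∀ n, E n
  | 0 => c
  | n + 1 =>
    if h : ∃ y ∈ C, y ∈ cylinder (toClosedSeq x n) n ∧ y n = x n then h.choose
    else toClosedSeq x n

noncomputable def toClosed (x : ∀ n, E n) : ∀ n, E n :=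
  fun n => toClosedSeq C c x (n + 1) n

variable {C c}

theorem toClosedSeq_mem (hc : c ∈ C) (x : ∀ n, E n) (n : ℕ) : toClosedSeq C c x n ∈ C := by
  induction n with
  | zero => exact hc
  | succ n ih =>
    rw [toClosedSeq]
    split_ifs with h
    exacts [h.choose_spec.1, ih]

theorem toClosedSeq_succ_mem_cylinder (x : ∀ n, E n) (n : ℕ) :
    toClosedSeq C c x (n + 1) ∈ cylinder (toClosedSeq C c x n) n := by
  rw [toClosedSeq]
  split_ifs with h
  exacts [h.choose_spec.2.1, self_mem_cylinder _ _]

theorem toClosedSeq_mem_cylinder (x : ∀ n, E n) {m n : ℕ} (hmn : m ≤ n) :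
    toClosedSeq C c x n ∈ cylinder (toClosedSeq C c x m) m := by
  induction n, hmn using Nat.le_induction with
  | base => exact self_mem_cylinder _ _
  | succ n hmn ih =>
    rw [← mem_cylinder_iff_eq.1 ih]
    exact cylinder_anti _ hmn (toClosedSeq_succ_mem_cylinder x n)

theorem toClosed_mem_cylinder (x : ∀ n, E n) (n : ℕ) :
    toClosed C c x ∈ cylinder (toClosedSeq C c x n) n := fun i hi =>
  (toClosedSeq_mem_cylinder x hi i i.lt_succ_self).symm

theorem toClosedSeq_congr {x y : ∀ n, E n} {n : ℕ} (h : y ∈ cylinder x n) :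
    toClosedSeq C c y n = toClosedSeq C c x n := by
  induction n with
  | zero => rfl
  | succ n ih =>
    rw [toClosedSeq, toClosedSeq, ih (cylinder_anti _ n.le_succ h), h n n.lt_succ_self]

theorem mem_cylinder_toClosedSeq_succ {x y : ∀ n, E n} {n : ℕ} (hy : y ∈ C)
    (hyn : y ∈ cylinder (toClosedSeq C c x n) n) (hxy : x n = y n) :
    y ∈ cylinder (toClosedSeq C c x (n + 1)) (n + 1) := by
  have h : ∃ y ∈ C, y ∈ cylinder (toClosedSeq C c x n) n ∧ y n = x n := ⟨y, hy, hyn, hxy.symm⟩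
  rw [toClosedSeq, dif_pos h]
  obtain ⟨-, hwn, hwx⟩ := h.choose_spec
  intro i hi
  rcases Nat.lt_succ_iff_lt_or_eq.1 hi with hi | rfl
  · exact (hyn i hi).trans (hwn i hi).symm
  · exact hxy.symm.trans hwx.symm

theorem toClosed_eq_of_mem_cylinder_toClosedSeq {x y : ∀ n, E n} {n : ℕ} (hy : y ∈ C)
    (hyn : y ∈ cylinder (toClosedSeq C c x n) n) (hxy : ∀ i, n ≤ i → x i = y i) :
    toClosed C c x = y := by
  have hfollow : ∀ m, n ≤ m → y ∈ cylinder (toClosedSeq C c x m) m := by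
    intro m hnm
    induction m, hnm using Nat.le_induction with
    | base => exact hyn
    | succ m hnm ih => exact mem_cylinder_toClosedSeq_succ hy ih (hxy m hnm)
  funext i
  have hi : i < max n (i + 1) := lt_max_of_lt_right i.lt_succ_self
  exact (toClosed_mem_cylinder x _ i hi).trans (hfollow _ (le_max_left _ _) i hi).symm

variable [∀ n, TopologicalSpace (E n)] [∀ n, DiscreteTopology (E n)]

theorem toClosed_mem (hC : IsClosed C) (hc : c ∈ C) (x : ∀ n, E n) : toClosed C c x ∈ C := by
  refine hC.closure_subset ((isTopologicalBasis_cylinders E).mem_closure_iff.2 ?_)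
  rintro _ ⟨y, n, rfl⟩ hx
  refine ⟨toClosedSeq C c x n, ?_, toClosedSeq_mem hc x n⟩
  rw [← mem_cylinder_iff_eq.1 hx, mem_cylinder_comm]
  exact toClosed_mem_cylinder x n

theorem continuous_toClosed : Continuous (toClosed C c) := by
  refine continuous_pi fun i => IsLocallyConstant.continuous <|
    (IsLocallyConstant.iff_eventually_eq _).2 fun x => ?_
  filter_upwards [(isOpen_cylinder E x (i + 1)).mem_nhds (self_mem_cylinder x (i + 1))] with y hy
  have hyx := toClosed_mem_cylinder (C := C) (c := c) y (i + 1)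
  rw [toClosedSeq_congr hy] at hyx
  exact (hyx i i.lt_succ_self).trans (toClosed_mem_cylinder x (i + 1) i i.lt_succ_self).symm

theorem image_toClosed_cylinder (hC : IsClosed C) (hc : c ∈ C) (x : ∀ n, E n) (n : ℕ) :
    toClosed C c '' cylinder x n = C ∩ cylinder (toClosedSeq C c x n) n := by
  ext y
  constructor
  · rintro ⟨z, hz, rfl⟩
    exact ⟨toClosed_mem hC hc z, toClosedSeq_congr hz ▸ toClosed_mem_cylinder z n⟩
  · rintro ⟨hy, hyn⟩
    let z : ∀ i, E i := fun i => if i < n then x i else y i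
    have hzx : z ∈ cylinder x n := fun i hi => if_pos hi
    refine ⟨z, hzx, toClosed_eq_of_mem_cylinder_toClosedSeq hy ?_ fun i hi => if_neg hi.not_gt⟩
    rwa [toClosedSeq_congr hzx]

theorem exists_continuous_isOpenMap_subtype_of_isClosed (hC : IsClosed C) (hne : C.Nonempty) :
    ∃ f : (∀ n, E n) → C, Continuous f ∧ IsOpenMap f := by
  obtain ⟨c, hc⟩ := hne
  refine ⟨codRestrict (toClosed C c) C (toClosed_mem hC hc), continuous_toClosed.codRestrict _,
    (isTopologicalBasis_cylinders E).isOpenMap_iff.2 ?_⟩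
  rintro _ ⟨x, n, rfl⟩
  have himage : codRestrict (toClosed C c) C (toClosed_mem hC hc) '' cylinder x n =
      (↑) ⁻¹' cylinder (toClosedSeq C c x n) n := by
    ext ⟨y, hy⟩
    simp only [mem_image, mem_preimage, Subtype.ext_iff, val_codRestrict_apply]
    rw [← mem_image, image_toClosed_cylinder hC hc x n]
    exact and_iff_right hy
  rw [himage]
  exact (isOpen_cylinder E _ n).preimage continuous_subtype_val

end PiNat

theorem covMeager_le_mk_of_isOpenMap {X Y : Type} [TopologicalSpace X] [TopologicalSpace Y]
    {f : X → Y} (hf : Continuous f) (hfo : IsOpenMap f) {𝒴 : Set (Set Y)}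
    (hmeagre : ∀ s ∈ 𝒴, IsMeagre s) (hcover : ⋃₀ 𝒴 = Set.univ) : covMeager X ≤ #𝒴 := by
  refine le_trans (csInf_le' (s := {c | _}) ⟨(f ⁻¹' ·) '' 𝒴, ?_, ?_, rfl⟩) mk_image_le
  · rintro _ ⟨s, hs, rfl⟩
    exact (hmeagre s hs).preimage_of_isOpenMap hf hfo
  · rw [sUnion_image, ← preimage_iUnion₂, ← sUnion_eq_biUnion, hcover, preimage_univ]

theorem exists_countable_subcover_or_covMeager_le {E : ℕ → Type} [∀ n, TopologicalSpace (E n)]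
    [∀ n, DiscreteTopology (E n)] [∀ n, Countable (E n)] {𝒳 : Set (Set (∀ n, E n))}
    (hclosed : ∀ A ∈ 𝒳, IsClosed A) (hcover : ⋃₀ 𝒳 = Set.univ) :
    (∃ 𝒳' ⊆ 𝒳, 𝒳'.Countable ∧ ⋃₀ 𝒳' = Set.univ) ∨ covMeager (∀ n, E n) ≤ #𝒳 := by
  obtain ⟨𝒢, h𝒢𝒳, h𝒢c, hlocus⟩ := exists_countable_subcover_countableSubcoverLocus (𝒳 := 𝒳)
  rcases (countableSubcoverLocus 𝒳)ᶜ |>.eq_empty_or_nonempty with hempty | hne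
  · refine .inl ⟨𝒢, h𝒢𝒳, h𝒢c, univ_subset_iff.1 ?_⟩
    rwa [← compl_empty_iff.1 hempty]
  obtain ⟨f, hf, hfo⟩ := PiNat.exists_continuous_isOpenMap_subtype_of_isClosed
    isOpen_countableSubcoverLocus.isClosed_compl hne
  refine .inr <| le_trans
    (covMeager_le_mk_of_isOpenMap hf hfo (𝒴 := ((↑) ⁻¹' ·) '' 𝒳) ?_ ?_) mk_image_le
  · rintro _ ⟨A, hA, rfl⟩
    exact (isNowhereDense_preimage_val_compl_countableSubcoverLocus hA (hclosed A hA)).isMeagre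
  · rw [sUnion_image, ← preimage_iUnion₂, ← sUnion_eq_biUnion, hcover, preimage_univ]

theorem closed_cover_countable_or_covMeager_le :
    (∀ 𝒳 : Set (Set (ℕ → ℕ)), (∀ A ∈ 𝒳, IsClosed A) → ⋃₀ 𝒳 = Set.univ →
      ((∃ 𝒳' ⊆ 𝒳, 𝒳'.Countable ∧ ⋃₀ 𝒳' = Set.univ) ∨
        covMeager (ℕ → ℕ) ≤ #𝒳)) ∧
    (∀ κ : Cardinal, Cardinal.aleph0 < κ →
      (∃ 𝒳 : Set (Set (ℕ → ℕ)), (∀ A ∈ 𝒳, IsClosed A) ∧ ⋃₀ 𝒳 = Set.univ ∧ #𝒳 = κ ∧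
        ∀ 𝒳' ⊆ 𝒳, #𝒳' < κ → ⋃₀ 𝒳' ≠ Set.univ) →
      covMeager (ℕ → ℕ) ≤ κ) := by
  refine ⟨fun 𝒳 => exists_countable_subcover_or_covMeager_le, ?_⟩
  rintro κ hκ ⟨𝒳, hclosed, hcover, rfl, hmin⟩
  refine (exists_countable_subcover_or_covMeager_le hclosed hcover).resolve_left ?_
  rintro ⟨𝒳', h𝒳', hcount, hcover'⟩
  exact hmin 𝒳' h𝒳' (hcount.le_aleph0.trans_lt hκ) hcover'
end

section
/- The dominating number 𝔡 is greater than or equal to cov(ℳ), the covering number of the meager ideal of Baire space: 𝔡 ≥ cov(ℳ). -/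
open Cardinal Set Filter

/-- `g` eventually majorizes `f`. -/
def EvMaj (g f : ℕ → ℕ) : Prop := ∀ᶠ n in Filter.atTop, f n < g n

/-- The dominating number 𝔡. -/
noncomputable def domNum : Cardinal :=
  sInf {c : Cardinal | ∃ D : Set (ℕ → ℕ),
    (∀ f : ℕ → ℕ, ∃ g ∈ D, EvMaj g f) ∧ c = #D}

/-
Each `g` eventually majorizes only a meagre set of functions: `{f | EvMaj g f}` is the countable
union over `N` of the closed sets `{f | ∀ n ≥ N, f n < g n}`, which have empty interior because a
basic open set constrains only finitely many coordinates, so one may set `f n = g n` at a large `n`.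
Hence a dominating family `D` yields the meagre cover `{{f | EvMaj g f} | g ∈ D}` of size `≤ #D`.
-/

open Topology in
theorem tendsto_update_cofinite {ι : Type*} {π : ι → Type*} [∀ i, TopologicalSpace (π i)]
    [DecidableEq ι] (x y : ∀ i, π i) :
    Tendsto (fun i => Function.update x i (y i)) cofinite (𝓝 x) :=
  tendsto_pi_nhds.2 fun j => tendsto_const_nhds.congr' <|
    (eventually_cofinite_ne j).mono fun _ hij => (Function.update_of_ne hij.symm _ _).symm

theorem isClosed_setOf_forall_ge_lt (g : ℕ → ℕ) (N : ℕ) :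
    IsClosed {f : ℕ → ℕ | ∀ n ≥ N, f n < g n} := by
  simp only [ofPred_forall]
  exact isClosed_iInter fun n => isClosed_iInter fun _ =>
    (isClosed_discrete (Iio (g n))).preimage (continuous_apply (A := fun _ => ℕ) n)

theorem interior_setOf_forall_ge_lt (g : ℕ → ℕ) (N : ℕ) :
    interior {f : ℕ → ℕ | ∀ n ≥ N, f n < g n} = ∅ := by
  refine interior_eq_empty_iff_dense_compl.2 fun x => ?_
  have hlim := tendsto_update_cofinite x g
  rw [Nat.cofinite_eq_atTop] at hlim
  refine mem_closure_of_tendsto hlim ((eventually_ge_atTop N).mono fun n hn hlt => ?_)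
  simpa using hlt n hn

theorem isMeagre_setOf_evMaj (g : ℕ → ℕ) : IsMeagre {f : ℕ → ℕ | EvMaj g f} := by
  have hcover : {f : ℕ → ℕ | EvMaj g f} = ⋃ N : ℕ, {f : ℕ → ℕ | ∀ n ≥ N, f n < g n} := by
    ext f
    simp only [mem_ofPred_eq, mem_iUnion]
    exact eventually_atTop
  rw [hcover]
  exact isMeagre_iUnion fun N =>
    ((isClosed_setOf_forall_ge_lt g N).isNowhereDense_iff.2
      (interior_setOf_forall_ge_lt g N)).isMeagre

theorem covMeager_le_mk {X : Type} [TopologicalSpace X] {F : Set (Set X)}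
    (hF : ∀ s ∈ F, IsMeagre s) (hcover : ⋃₀ F = Set.univ) : covMeager X ≤ #F :=
  csInf_le' ⟨F, hF, hcover, rfl⟩

theorem exists_dominating_family :
    ∃ D : Set (ℕ → ℕ), ∀ f : ℕ → ℕ, ∃ g ∈ D, EvMaj g f :=
  ⟨Set.univ, fun f => ⟨f + 1, mem_univ _, .of_forall fun n => Nat.lt_succ_self (f n)⟩⟩

theorem covMeager_le_domNum : covMeager (ℕ → ℕ) ≤ domNum := by
  obtain ⟨D₀, hD₀⟩ := exists_dominating_family
  refine le_csInf ⟨_, D₀, hD₀, rfl⟩ ?_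
  rintro _ ⟨D, hD, rfl⟩
  have hcover : ⋃₀ ((fun g => {f | EvMaj g f}) '' D) = Set.univ :=
    eq_univ_of_forall fun f =>
      let ⟨g, hgD, hg⟩ := hD f
      ⟨_, mem_image_of_mem _ hgD, hg⟩
  calc covMeager (ℕ → ℕ)
      ≤ #((fun g => {f : ℕ → ℕ | EvMaj g f}) '' D) :=
        covMeager_le_mk (forall_mem_image.2 fun g _ => isMeagre_setOf_evMaj g) hcover
    _ ≤ #D := mk_image_le
end

section
/- The unsplitting number 𝔯 is greater than or equal to the covering number of the meager ideal of Cantor space: 𝔯 ≥ cov(ℳ), where cov(ℳ) is computed in the space ℕ → Bool with the product topology. -/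
open Cardinal Set

/-- `X` splits `Y`: both `X ∩ Y` and `Y \ X` are infinite. -/
def Splits (X Y : Set ℕ) : Prop := (X ∩ Y).Infinite ∧ (Y \ X).Infinite

/-- The unsplitting (reaping) number 𝔯. -/
noncomputable def unsplitNum : Cardinal :=
  sInf {c : Cardinal | ∃ R : Set (Set ℕ),
    (∀ Y ∈ R, Y.Infinite) ∧ (∀ X : Set ℕ, ∃ Y ∈ R, ¬ Splits X Y) ∧ c = #R}

/-!
Identify `X ⊆ ℕ` with its characteristic function `f`. For a fixed infinite `Y`, a generic `f`
takes both values infinitely often on `Y`, since each "some `n ∈ Y` beyond `N` has `f n = b`"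
is dense open. So the `f` that fail to split `Y` form a meagre set, and an unsplit family `R`
yields `#R` meagre sets covering Cantor space.
-/

section HitsValue

variable {ι α : Type*} [TopologicalSpace α]

theorem isOpen_setOf_exists_mem_apply_eq {a : α} (ha : IsOpen ({a} : Set α)) (S : Set ι) :
    IsOpen {f : ι → α | ∃ n ∈ S, f n = a} := by
  have hS : {f : ι → α | ∃ n ∈ S, f n = a} = ⋃ n ∈ S, (fun f : ι → α => f n) ⁻¹' {a} := by
    ext f; simp
  rw [hS]
  exact isOpen_biUnion fun n _ => ha.preimage (continuous_apply n)

theorem dense_setOf_exists_mem_apply_eq {S : Set ι} (hS : S.Infinite) (a : α) :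
    Dense {f : ι → α | ∃ n ∈ S, f n = a} := by
  classical
  intro f
  have := hS.to_subtype
  let e : ℕ ↪ S := Infinite.natEmbedding S
  have he : Function.Injective fun k => (e k : ι) := Subtype.val_injective.comp e.injective
  refine mem_closure_of_tendsto (f := fun k => Function.update f (e k) a) (b := Filter.atTop)
    ?_ (Filter.Eventually.of_forall fun k => ⟨e k, (e k).2, Function.update_self _ _ _⟩)
  rw [tendsto_pi_nhds]
  intro i
  -- `e k ≠ i` for all but at most one `k`, so the updates eventually leave coordinate `i` alone.
  have hne : ∀ᶠ k in Filter.atTop, (e k : ι) ≠ i := by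
    rw [← Nat.cofinite_eq_atTop]
    exact he.tendsto_cofinite.eventually (Filter.eventually_cofinite_ne i)
  exact tendsto_nhds_of_eventually_eq (hne.mono fun k hk => Function.update_of_ne hk.symm a f)

theorem residual_setOf_infinite_inter_preimage {a : α} (ha : IsOpen ({a} : Set α)) {S : Set ℕ}
    (hS : S.Infinite) : {f : ℕ → α | (S ∩ f ⁻¹' {a}).Infinite} ∈ residual (ℕ → α) := by
  have hinter : {f : ℕ → α | (S ∩ f ⁻¹' {a}).Infinite} =
      ⋂ N : ℕ, {f : ℕ → α | ∃ n ∈ S ∩ Ioi N, f n = a} := by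
    ext f
    simp only [Set.infinite_iff_exists_gt, mem_iInter]
    exact forall_congr' fun N => ⟨fun ⟨n, ⟨hnS, hfn⟩, hNn⟩ => ⟨n, ⟨hnS, hNn⟩, hfn⟩,
      fun ⟨n, ⟨hnS, hNn⟩, hfn⟩ => ⟨n, ⟨hnS, hfn⟩, hNn⟩⟩
  have hS' (N : ℕ) : (S ∩ Ioi N).Infinite :=
    (hS.sdiff (finite_Iic N)).mono fun _ hn => ⟨hn.1, not_le.mp (mt mem_Iic.mpr hn.2)⟩
  rw [hinter]
  exact countable_iInter_mem.mpr fun N => residual_of_dense_open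
    (isOpen_setOf_exists_mem_apply_eq ha _) (dense_setOf_exists_mem_apply_eq (hS' N) a)

end HitsValue

theorem isMeagre_setOf_not_splits {Y : Set ℕ} (hY : Y.Infinite) :
    IsMeagre {f : ℕ → Bool | ¬ Splits {n | f n = true} Y} := by
  refine Filter.mem_of_superset (Filter.inter_mem
    (residual_setOf_infinite_inter_preimage (isOpen_discrete {true}) hY)
    (residual_setOf_infinite_inter_preimage (isOpen_discrete {false}) hY)) ?_
  rintro f ⟨hTrue, hFalse⟩
  have hdiff : Y \ {n | f n = true} = Y ∩ f ⁻¹' {false} := by ext n; simp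
  exact not_not_intro ⟨by rwa [inter_comm], by rwa [hdiff]⟩

theorem covMeager_le_mk_of_iUnion_eq_univ {X ι : Type} [TopologicalSpace X] {s : ι → Set X}
    (hs : ∀ i, IsMeagre (s i)) (hcover : ⋃ i, s i = Set.univ) : covMeager X ≤ #ι :=
  calc covMeager X ≤ #(range s) :=
        csInf_le' ⟨range s, forall_mem_range.mpr hs, by rwa [sUnion_range], rfl⟩
    _ ≤ #ι := mk_range_le

theorem covMeager_le_mk_of_forall_not_splits {R : Set (Set ℕ)} (hR : ∀ Y ∈ R, Y.Infinite)
    (hunsplit : ∀ X : Set ℕ, ∃ Y ∈ R, ¬ Splits X Y) : covMeager (ℕ → Bool) ≤ #R := by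
  refine covMeager_le_mk_of_iUnion_eq_univ
    (s := fun Y : R => {f : ℕ → Bool | ¬ Splits {n | f n = true} Y})
    (fun Y => isMeagre_setOf_not_splits (hR Y Y.2)) (eq_univ_of_forall fun f => ?_)
  obtain ⟨Y, hYR, hY⟩ := hunsplit {n | f n = true}
  exact mem_iUnion.mpr ⟨⟨Y, hYR⟩, hY⟩

theorem exists_forall_not_splits :
    ∃ R : Set (Set ℕ), (∀ Y ∈ R, Y.Infinite) ∧ ∀ X : Set ℕ, ∃ Y ∈ R, ¬ Splits X Y := by
  refine ⟨{Y | Y.Infinite}, fun Y hY => hY, fun X => ?_⟩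
  by_cases hX : X.Infinite
  · exact ⟨X, hX, fun h => by simpa using h.2⟩
  · exact ⟨Set.univ, Set.infinite_univ, fun h => hX (by simpa using h.1)⟩

theorem covMeager_le_unsplitNum : covMeager (ℕ → Bool) ≤ unsplitNum := by
  obtain ⟨R₀, hR₀, hR₀unsplit⟩ := exists_forall_not_splits
  refine le_csInf ⟨#R₀, R₀, hR₀, hR₀unsplit, rfl⟩ ?_
  rintro c ⟨R, hR, hunsplit, rfl⟩
  exact covMeager_le_mk_of_forall_not_splits hR hunsplit
end

section
/- The uniformity of the Lebesgue null ideal is at least the covering number of the meager ideal of ℝ: the least cardinality of a subset of ℝ that is not Lebesgue null is greater than or equal to the least cardinality of a family of meager subsets of ℝ whose union is all of ℝ. -/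
open Cardinal Set MeasureTheory

/-- The uniformity of the Lebesgue null ideal: least cardinality of a non-null set of reals. -/
noncomputable def unifNull : Cardinal :=
  sInf {c : Cardinal | ∃ S : Set ℝ, MeasureTheory.volume S ≠ 0 ∧ c = #S}

/-- The covering number of the meager ideal of ℝ. -/
noncomputable def covMeagerReal : Cardinal :=
  sInf {c : Cardinal | ∃ F : Set (Set ℝ),
    (∀ s ∈ F, IsMeagre s) ∧ ⋃₀ F = Set.univ ∧ c = #F}

/-!
ℝ is the union of a meagre set `M` and a Lebesgue null set `Mᶜ`. If `S` is not null, the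
translates `s - M` (`s ∈ S`) cover ℝ: a point `x` outside all of them would give
`S ⊆ x + Mᶜ`, a null set. These `#S`-many translates are meagre.
-/

open scoped Pointwise

theorem IsMeagre.image_homeomorph {X Y : Type*} [TopologicalSpace X] [TopologicalSpace Y]
    {s : Set X} (hs : IsMeagre s) (e : X ≃ₜ Y) : IsMeagre (e '' s) := by
  rw [e.image_eq_preimage_symm]
  exact hs.preimage_of_isOpenMap e.symm.continuous e.symm.isOpenMap

theorem exists_isMeagre_measure_compl_eq_zero {X : Type*} [TopologicalSpace X]
    [MeasurableSpace X] {μ : Measure X} (h : Disjoint (residual X) (ae μ)) :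
    ∃ M : Set X, IsMeagre M ∧ μ Mᶜ = 0 := by
  obtain ⟨U, hU, V, hV, hUV⟩ := Filter.disjoint_iff.1 h
  refine ⟨Uᶜ, by rwa [IsMeagre, compl_compl], ?_⟩
  rw [compl_compl]
  exact measure_mono_null hUV.subset_compl_right (mem_ae_iff.1 hV)

theorem sub_eq_univ_of_measure_ne_zero_of_measure_compl_eq_zero {G : Type*} [AddGroup G]
    [MeasurableSpace G] [MeasurableAdd G] {μ : Measure G} [μ.IsAddLeftInvariant]
    {S M : Set G} (hS : μ S ≠ 0) (hM : μ Mᶜ = 0) : S - M = Set.univ := by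
  refine eq_univ_of_forall fun x => ?_
  have hS_not_sub : ¬ S ⊆ x +ᵥ Mᶜ :=
    fun hsub => hS (measure_mono_null hsub (measure_vadd_null hM x))
  obtain ⟨s, hs, hsM⟩ := not_subset.1 hS_not_sub
  rw [vadd_set_compl, mem_compl_iff, not_not] at hsM
  obtain ⟨m, hm, rfl⟩ := hsM
  exact ⟨_, hs, m, hm, add_sub_cancel_right x m⟩

theorem covMeagerReal_le_mk {F : Set (Set ℝ)} (hF : ∀ s ∈ F, IsMeagre s)
    (hcover : ⋃₀ F = Set.univ) : covMeagerReal ≤ #F :=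
  csInf_le' ⟨F, hF, hcover, rfl⟩

theorem le_unifNull {c : Cardinal} (h : ∀ S : Set ℝ, volume S ≠ 0 → c ≤ #S) : c ≤ unifNull :=
  le_csInf ⟨_, Set.univ, by simp, rfl⟩ fun _ ⟨S, hS, hc⟩ => hc ▸ h S hS

theorem covMeagerReal_le_unifNull : covMeagerReal ≤ unifNull := by
  obtain ⟨M, hM, hMc⟩ := exists_isMeagre_measure_compl_eq_zero Real.disjoint_residual_ae
  refine le_unifNull fun S hS => ?_
  have hcover : ⋃₀ ((fun s => (s - ·) '' M) '' S) = Set.univ := by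
    rw [sUnion_image, iUnion_image_left]
    exact sub_eq_univ_of_measure_ne_zero_of_measure_compl_eq_zero hS hMc
  calc covMeagerReal ≤ #((fun s => (s - ·) '' M) '' S) :=
        covMeagerReal_le_mk
          (by rintro _ ⟨s, -, rfl⟩; exact hM.image_homeomorph (Homeomorph.subLeft s)) hcover
    _ ≤ #S := mk_image_le
end

section
/- Let 𝒳 be an infinite maximal almost disjoint family of infinite subsets of ℕ. For each X ∈ 𝒳 let M(X) = {Y : Y is an infinite subset of ℕ and X ∩ Y is infinite}. Then: (1) each M(X), viewed as a subset of Cantor space ℕ → Bool via characteristic functions, is a Gδ set; (2) the sets M(X) for X ∈ 𝒳 cover the collection of all infinite subsets of ℕ; and (3) for every proper subfamily 𝒳' ⊊ 𝒳, the sets M(X) for X ∈ 𝒳' do not cover the collection of all infinite subsets of ℕ. Consequently the cardinality of 𝒳 is a Π⁰₂-characteristic. -/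
/-! An infinite maximal almost disjoint family `𝒳` is uncountable, since a countable one can be
diagonalised. Its members `X` give the sets `M(X)` of infinite sets meeting `X` infinitely; these
cover, and `X ∈ M(X)` while `X ∉ M(X')` for `X' ≠ X`, so no proper subfamily covers. Coding an
infinite subset of `ℕ` by the gaps of its increasing enumeration turns each `M(X)` into a
`Gδ` subset of Baire space, and `X ↦ M(X)` is injective on `𝒳`, so these `#𝒳` sets witness that
`#𝒳` is a Π⁰₂-characteristic. -/

open Cardinal Set

/-- κ is a Π⁰₂-characteristic: κ is uncountable and some family of κ many Gδ subsets
of Baire space covers it, while no subfamily of cardinality < κ does. -/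
def IsPi02Char (κ : Cardinal) : Prop :=
  Cardinal.aleph0 < κ ∧
    ∃ F : Set (Set (ℕ → ℕ)), (∀ A ∈ F, IsGδ A) ∧ ⋃₀ F = Set.univ ∧ #F = κ ∧
      ∀ F' ⊆ F, #F' < κ → ⋃₀ F' ≠ Set.univ

theorem isGδ_setOf_infinite_setOf_mem {α : Type*} [TopologicalSpace α] {U : ℕ → Set α}
    (hU : ∀ n, IsOpen (U n)) : IsGδ {x | {n | x ∈ U n}.Infinite} := by
  have : {x | {n | x ∈ U n}.Infinite} = ⋂ m, ⋃ n ≥ m, U n := by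
    ext x
    simp [← Nat.frequently_atTop_iff_infinite, Filter.frequently_atTop]
  rw [this]
  exact .iInter_of_isOpen fun m => isOpen_biUnion fun n _ => hU n

theorem isGδ_setOf_infinite_inter (X : Set ℕ) : IsGδ {f : ℕ → Bool |
    {n : ℕ | f n = true}.Infinite ∧ (X ∩ {n : ℕ | f n = true}).Infinite} := by
  have : {f : ℕ → Bool | {n | f n = true}.Infinite ∧ (X ∩ {n | f n = true}).Infinite} =
      {f | {n | f ∈ {g : ℕ → Bool | n ∈ X} ∩ (fun g => g n) ⁻¹' {true}}.Infinite} := by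
    ext f
    exact and_iff_right_of_imp fun h => h.mono inter_subset_right
  rw [this]
  exact isGδ_setOf_infinite_setOf_mem fun n =>
    isOpen_const.inter ((isOpen_discrete _).preimage (continuous_apply n))

section AlmostDisjoint

variable {α : Type*} {𝒳 : Set (Set α)}

theorem exists_infinite_forall_not_infinite_inter_of_ssubset
    (hmem : ∀ X ∈ 𝒳, X.Infinite) (had : 𝒳.Pairwise fun X X' => (X ∩ X').Finite)
    {𝒳' : Set (Set α)} (h𝒳' : 𝒳' ⊂ 𝒳) :
    ∃ Y : Set α, Y.Infinite ∧ ∀ X ∈ 𝒳', ¬ (X ∩ Y).Infinite := by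
  obtain ⟨X₀, hX₀, hX₀'⟩ := exists_of_ssubset h𝒳'
  exact ⟨X₀, hmem X₀ hX₀, fun X hX hinf => hX₀' (had.eq (h𝒳'.1 hX) hX₀ hinf ▸ hX)⟩

theorem exists_infinite_forall_inter_finite {e : ℕ → Set α} (he : ∀ n, (e n).Infinite)
    (had : Pairwise fun i j => (e i ∩ e j).Finite) :
    ∃ Y : Set α, Y.Infinite ∧ ∀ n, (e n ∩ Y).Finite := by
  have hfresh : ∀ n, (e n \ ⋃ i ∈ Iio n, e i).Infinite := fun n => by
    rw [← sdiff_self_inter, inter_iUnion₂]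
    exact (he n).sdiff ((finite_Iio n).biUnion fun i hi => had (ne_of_gt hi))
  choose y hy using fun n => (hfresh n).nonempty
  have hy_not_mem : ∀ {i n}, i < n → y n ∉ e i := fun hin hyi =>
    (hy _).2 (mem_biUnion hin hyi)
  have hy_inj : Function.Injective y :=
    .of_lt_imp_ne fun a b hab heq => hy_not_mem hab (heq ▸ (hy a).1)
  refine ⟨range y, infinite_range_of_injective hy_inj, fun i => ?_⟩
  refine ((finite_Iic i).image y).subset ?_
  rintro _ ⟨hx, n, rfl⟩
  exact ⟨n, not_lt.mp fun hin => hy_not_mem hin hx, rfl⟩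

theorem aleph0_lt_mk_of_maximal (hinf : 𝒳.Infinite) (hmem : ∀ X ∈ 𝒳, X.Infinite)
    (had : 𝒳.Pairwise fun X X' => (X ∩ X').Finite)
    (hmax : ∀ Y : Set α, Y.Infinite → ∃ X ∈ 𝒳, (X ∩ Y).Infinite) :
    ℵ₀ < #𝒳 := by
  by_contra! hle
  have : Countable 𝒳 := mk_le_aleph0_iff.mp hle
  have : Infinite 𝒳 := hinf.to_subtype
  obtain ⟨e⟩ : Nonempty (ℕ ≃ 𝒳) := nonempty_equiv_of_countable
  obtain ⟨Y, hY, hYfin⟩ := exists_infinite_forall_inter_finite (e := fun n => (e n : Set α))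
    (fun n => hmem _ (e n).2)
    (had.on_injective (Subtype.val_injective.comp e.injective) fun n => (e n).2)
  obtain ⟨X, hX, hXY⟩ := hmax Y hY
  exact hXY (by simpa using hYfin (e.symm ⟨X, hX⟩))

end AlmostDisjoint

/-- The increasing sequence starting at `f 0` whose successive gaps are `f (n + 1) + 1`; every
infinite subset of `ℕ` is the range of exactly one such sequence. -/
def seqOfGaps (f : ℕ → ℕ) (n : ℕ) : ℕ := ∑ i ∈ Finset.range (n + 1), f i + n

theorem seqOfGaps_succ (f : ℕ → ℕ) (n : ℕ) :
    seqOfGaps f (n + 1) = seqOfGaps f n + f (n + 1) + 1 := by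
  simp only [seqOfGaps, Finset.sum_range_succ _ (n + 1)]
  ring

theorem strictMono_seqOfGaps (f : ℕ → ℕ) : StrictMono (seqOfGaps f) :=
  strictMono_nat_of_lt_succ fun n => by rw [seqOfGaps_succ]; omega

theorem continuous_seqOfGaps_apply (n : ℕ) : Continuous fun f : ℕ → ℕ => seqOfGaps f n := by
  unfold seqOfGaps
  fun_prop

theorem exists_range_seqOfGaps_eq {Y : Set ℕ} (hY : Y.Infinite) :
    ∃ f, range (seqOfGaps f) = Y := by
  set e := Nat.nth (· ∈ Y)
  have he : StrictMono e := Nat.nth_strictMono hY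
  let gaps : ℕ → ℕ := fun | 0 => e 0 | n + 1 => e (n + 1) - e n - 1
  have hseq : seqOfGaps gaps = e := funext fun n => by
    induction n with
    | zero => simp [seqOfGaps, gaps]
    | succ n ih =>
      rw [seqOfGaps_succ, ih]
      have := he (Nat.lt_add_one n)
      simp only [gaps]
      omega
  exact ⟨gaps, hseq ▸ Nat.range_nth_of_infinite hY⟩

/-- The set `M(X)` transported to Baire space along `f ↦ range (seqOfGaps f)`. -/
def baireSet (X : Set ℕ) : Set (ℕ → ℕ) := {f | (X ∩ range (seqOfGaps f)).Infinite}

theorem mem_baireSet {X : Set ℕ} {f : ℕ → ℕ} :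
    f ∈ baireSet X ↔ (X ∩ range (seqOfGaps f)).Infinite :=
  Iff.rfl

theorem isGδ_baireSet (X : Set ℕ) : IsGδ (baireSet X) := by
  have : baireSet X = {f | {n | f ∈ (seqOfGaps · n) ⁻¹' X}.Infinite} := by
    ext f
    rw [mem_baireSet, mem_ofPred_eq, ← image_preimage_eq_inter_range,
      infinite_image_iff (strictMono_seqOfGaps f).injective.injOn]
    rfl
  rw [this]
  exact isGδ_setOf_infinite_setOf_mem fun n =>
    (isOpen_discrete X).preimage (continuous_seqOfGaps_apply n)

theorem isPi02Char_of_irredundant_cover {F : Set (Set (ℕ → ℕ))} (hF : ℵ₀ < #F)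
    (hGδ : ∀ A ∈ F, IsGδ A) (hcov : ⋃₀ F = Set.univ) (hirr : ∀ F' ⊂ F, ⋃₀ F' ≠ Set.univ) :
    IsPi02Char #F :=
  ⟨hF, F, hGδ, hcov, rfl, fun F' hsub hlt =>
    hirr F' (ssubset_of_subset_of_ne hsub (by rintro rfl; exact hlt.false))⟩

section MaximalAlmostDisjoint

variable {𝒳 : Set (Set ℕ)}

theorem injOn_baireSet (hmem : ∀ X ∈ 𝒳, X.Infinite)
    (had : 𝒳.Pairwise fun X X' => (X ∩ X').Finite) : InjOn baireSet 𝒳 := by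
  intro X hX X' hX' h
  obtain ⟨f, hf⟩ := exists_range_seqOfGaps_eq (hmem X hX)
  have hfX : f ∈ baireSet X := by rw [mem_baireSet, hf, inter_self]; exact hmem X hX
  rw [h, mem_baireSet, hf] at hfX
  exact (had.eq hX' hX hfX).symm

theorem sUnion_image_baireSet
    (hmax : ∀ Y : Set ℕ, Y.Infinite → ∃ X ∈ 𝒳, (X ∩ Y).Infinite) :
    ⋃₀ (baireSet '' 𝒳) = Set.univ :=
  eq_univ_of_forall fun f => by
    obtain ⟨X, hX, hXf⟩ := hmax _ (infinite_range_of_injective (strictMono_seqOfGaps f).injective)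
    exact ⟨baireSet X, mem_image_of_mem _ hX, hXf⟩

theorem sUnion_ne_univ_of_ssubset_image_baireSet (hmem : ∀ X ∈ 𝒳, X.Infinite)
    (had : 𝒳.Pairwise fun X X' => (X ∩ X').Finite) {F' : Set (Set (ℕ → ℕ))}
    (hF' : F' ⊂ baireSet '' 𝒳) : ⋃₀ F' ≠ Set.univ := by
  obtain ⟨_, ⟨X₀, hX₀, rfl⟩, hX₀F'⟩ := exists_of_ssubset hF'
  obtain ⟨f, hf⟩ := exists_range_seqOfGaps_eq (hmem X₀ hX₀)
  intro hcov
  obtain ⟨_, hB, hfB⟩ : f ∈ ⋃₀ F' := hcov ▸ mem_univ f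
  obtain ⟨X, hX, rfl⟩ := hF'.1 hB
  rw [mem_baireSet, hf] at hfB
  exact hX₀F' (had.eq hX hX₀ hfB ▸ hB)

theorem isPi02Char_mk_of_maximal (hinf : 𝒳.Infinite) (hmem : ∀ X ∈ 𝒳, X.Infinite)
    (had : 𝒳.Pairwise fun X X' => (X ∩ X').Finite)
    (hmax : ∀ Y : Set ℕ, Y.Infinite → ∃ X ∈ 𝒳, (X ∩ Y).Infinite) :
    IsPi02Char #𝒳 := by
  have hcard := mk_image_eq_of_injOn _ _ (injOn_baireSet hmem had)
  rw [← hcard]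
  refine isPi02Char_of_irredundant_cover ?_ ?_ (sUnion_image_baireSet hmax)
    fun _ hF' => sUnion_ne_univ_of_ssubset_image_baireSet hmem had hF'
  · exact hcard ▸ aleph0_lt_mk_of_maximal hinf hmem had hmax
  · rintro _ ⟨X, -, rfl⟩
    exact isGδ_baireSet X

end MaximalAlmostDisjoint

theorem mad_family_pi02 (𝒳 : Set (Set ℕ))
    (h𝒳inf : 𝒳.Infinite)
    (hmem : ∀ X ∈ 𝒳, X.Infinite)
    (had : ∀ X ∈ 𝒳, ∀ X' ∈ 𝒳, X ≠ X' → (X ∩ X').Finite)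
    (hmax : ∀ Y : Set ℕ, Y.Infinite → ∃ X ∈ 𝒳, (X ∩ Y).Infinite) :
    (∀ X ∈ 𝒳, IsGδ {f : ℕ → Bool |
        {n : ℕ | f n = true}.Infinite ∧ (X ∩ {n : ℕ | f n = true}).Infinite}) ∧
    (∀ Y : Set ℕ, Y.Infinite → ∃ X ∈ 𝒳, (X ∩ Y).Infinite) ∧
    (∀ 𝒳' : Set (Set ℕ), 𝒳' ⊂ 𝒳 →
      ∃ Y : Set ℕ, Y.Infinite ∧ ∀ X ∈ 𝒳', ¬ (X ∩ Y).Infinite) ∧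
    IsPi02Char #𝒳 :=
  ⟨fun X _ => isGδ_setOf_infinite_inter X, hmax,
    fun _ h𝒳' => exists_infinite_forall_not_infinite_inter_of_ssubset hmem had h𝒳',
    isPi02Char_mk_of_maximal h𝒳inf hmem had hmax⟩
end

section
/- Let κ be an uncountable regular cardinal and let (X_α)_{α<κ} be a tower: a sequence of infinite subsets of ℕ such that X_α ⊆* X_β whenever β < α < κ, and such that no infinite Y ⊆ ℕ satisfies Y ⊆* X_α for all α < κ. For each α < κ let Q_α = {Y : Y is an infinite subset of ℕ and Y \ X_α is infinite}. Then: (1) each Q_α, viewed as a subset of Cantor space ℕ → Bool via characteristic functions, is a Gδ set; (2) the sets Q_α for α < κ cover the collection of all infinite subsets of ℕ; and (3) for every S ⊆ κ of cardinality < κ, the sets Q_α for α ∈ S do not cover the collection of all infinite subsets of ℕ. -/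
open Cardinal Set

lemma isGδ_diff_infinite (T : Set ℕ) :
    IsGδ {f : ℕ → Bool | ({n : ℕ | f n = true} \ T).Infinite} := by
  have : {f : ℕ → Bool | ({n : ℕ | f n = true} \ T).Infinite} =
      ⋂ m : ℕ, ⋃ n ∈ {n : ℕ | m < n ∧ n ∉ T}, {f : ℕ → Bool | f n = true} := by
    ext f
    simp only [Set.mem_setOf_eq, Set.mem_iInter, Set.mem_iUnion]
    constructor
    · intro h m
      obtain ⟨n, hn, hlt⟩ := h.exists_gt m
      exact ⟨n, ⟨hlt, hn.2⟩, hn.1⟩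
    · intro h
      apply Set.infinite_of_forall_exists_gt
      intro m
      obtain ⟨n, ⟨hlt, hnT⟩, hfn⟩ := h m
      exact ⟨n, ⟨hfn, hnT⟩, hlt⟩
  rw [this]
  apply IsGδ.iInter
  intro m
  apply IsOpen.isGδ
  apply isOpen_biUnion
  intro n _
  have : {f : ℕ → Bool | f n = true} = (fun f : ℕ → Bool => f n) ⁻¹' {true} := rfl
  rw [this]
  exact (continuous_apply n).isOpen_preimage _ (isOpen_discrete _)

theorem tower_pi02 (κ : Cardinal) (hκ : Cardinal.aleph0 < κ) (hreg : κ.IsRegular)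
    (X : κ.ord.ToType → Set ℕ)
    (hinf : ∀ α, (X α).Infinite)
    (hdec : ∀ β α : κ.ord.ToType, β < α → (X α \ X β).Finite)
    (htower : ∀ Y : Set ℕ, Y.Infinite → ∃ α, (Y \ X α).Infinite) :
    (∀ α, IsGδ {f : ℕ → Bool |
        {n : ℕ | f n = true}.Infinite ∧ ({n : ℕ | f n = true} \ X α).Infinite}) ∧
    (∀ Y : Set ℕ, Y.Infinite → ∃ α, (Y \ X α).Infinite) ∧
    (∀ S : Set κ.ord.ToType, #S < κ →
      ∃ Y : Set ℕ, Y.Infinite ∧ ∀ α ∈ S, ¬ (Y \ X α).Infinite) := by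
  refine ⟨?_, htower, ?_⟩
  · intro α
    have h1 : IsGδ {f : ℕ → Bool | {n : ℕ | f n = true}.Infinite} := by
      have := isGδ_diff_infinite (∅ : Set ℕ)
      simpa using this
    have h2 := isGδ_diff_infinite (X α)
    exact h1.inter h2
  · intro S hS
    haveI : IsWellOrder κ.ord.ToType (· < ·) := isWellOrder_lt
    have hcof : #S < (Ordinal.type ((· < ·) : κ.ord.ToType → κ.ord.ToType → Prop)).cof := by
      rwa [Ordinal.type_toType, hreg.cof_eq]
    obtain ⟨a, ha⟩ : ∃ a : κ.ord.ToType, ∀ b ∈ S, b < a := by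
      by_contra hne
      push_neg at hne
      rw [Ordinal.cof_type] at hcof
      exact (Order.cof_le (s := S) hne).not_gt hcof
    refine ⟨X a, hinf a, ?_⟩
    intro β hβ
    simpa using (hdec β a (ha β hβ)).not_infinite
end

section
/- Define the relation R between x : ℕ → ℕ and y : ℕ × ℕ → ℕ by R(x,y) iff for every n there exists k with x k ≠ y (n,k). Then R is a Gδ subset of the product space (ℕ → ℕ) × (ℕ × ℕ → ℕ) (both factors carrying the product topology), and the least cardinality of a set 𝒳 ⊆ ℕ → ℕ such that for every y : ℕ × ℕ → ℕ there exists x ∈ 𝒳 with R(x,y) equals ℵ₁. In particular ℵ₁ is a uniform Π⁰₂-characteristic. -/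
/-! A countable family `x₀, x₁, …` is defeated by the `y` whose `n`-th row is `xₙ`, while the rows
of a single `y` form a countable set, so an uncountable family always contains an `x` different
from every row. Hence the families in question are exactly the uncountable ones, and the least
cardinality of such a family is `ℵ₁ ≤ 𝔠`. -/

open Cardinal Set

theorem isGδ_setOf_forall_exists_apply_ne {ι κ α : Type*} [Countable κ] [TopologicalSpace α]
    [T2Space α] : IsGδ {p : (ι → α) × (κ × ι → α) | ∀ n, ∃ k, p.1 k ≠ p.2 (n, k)} := by
  have : {p : (ι → α) × (κ × ι → α) | ∀ n, ∃ k, p.1 k ≠ p.2 (n, k)} =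
      ⋂ n, ⋃ k, {p | p.1 k ≠ p.2 (n, k)} := by
    ext p; simp
  rw [this]
  exact .iInter_of_isOpen fun n => isOpen_iUnion fun k => isOpen_ne_fun (by fun_prop) (by fun_prop)

theorem forall_exists_mem_forall_exists_ne_iff_not_countable {ι α : Type*} [Nonempty α]
    (𝒳 : Set (ι → α)) :
    (∀ y : ℕ × ι → α, ∃ x ∈ 𝒳, ∀ n, ∃ k, x k ≠ y (n, k)) ↔ ¬ 𝒳.Countable := by
  have rows : ∀ y : ℕ × ι → α, (∃ x ∈ 𝒳, ∀ n, ∃ k, x k ≠ y (n, k)) ↔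
      ¬ 𝒳 ⊆ range (Function.curry y) := by
    intro y
    simp only [not_subset, mem_range, not_exists, ← Function.ne_iff, ne_comm]
    rfl
  simp only [rows, countable_iff_exists_subset_range, not_exists]
  exact ⟨fun h y => by simpa using h (Function.uncurry y), fun h y => h _⟩

theorem sInf_mk_of_not_countable {α : Type*} (h : ℵ₁ ≤ #α) :
    sInf {c : Cardinal | ∃ s : Set α, ¬ s.Countable ∧ c = #s} = ℵ₁ := by
  simp only [← le_aleph0_iff_set_countable, not_le, ← aleph_one_le_iff]
  obtain ⟨s, hs⟩ := le_mk_iff_exists_set.mp h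
  have hmem : ℵ₁ ∈ {c : Cardinal | ∃ s : Set α, ℵ₁ ≤ #s ∧ c = #s} := ⟨s, hs.ge, hs.symm⟩
  refine le_antisymm (csInf_le' hmem) (le_csInf ⟨_, hmem⟩ ?_)
  rintro c ⟨s, hs, rfl⟩
  exact hs

theorem aleph_one_uniform_pi02 :
    IsGδ {p : (ℕ → ℕ) × (ℕ × ℕ → ℕ) | ∀ n : ℕ, ∃ k : ℕ, p.1 k ≠ p.2 (n, k)} ∧
    sInf {c : Cardinal | ∃ 𝒳 : Set (ℕ → ℕ),
        (∀ y : ℕ × ℕ → ℕ, ∃ x ∈ 𝒳, ∀ n : ℕ, ∃ k : ℕ, x k ≠ y (n, k)) ∧ c = #𝒳} =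
      Cardinal.aleph 1 := by
  refine ⟨isGδ_setOf_forall_exists_apply_ne, ?_⟩
  simp only [forall_exists_mem_forall_exists_ne_iff_not_countable]
  apply sInf_mk_of_not_countable
  simpa using aleph_one_le_continuum
end

section
/- Let R be a binary relation on Baire space ℕ → ℕ that, as a subset of (ℕ → ℕ) × (ℕ → ℕ), is a Gδ set, and suppose R is invariant under finite modifications of its first argument (if x and x' agree at all but finitely many coordinates and R(x,y), then R(x',y)). Suppose further that for every y there exists some x with R(x,y). Then the least cardinality of a set 𝒳 ⊆ ℕ → ℕ such that for every y there is x ∈ 𝒳 with R(x,y) is at most unif(ℳ), the least cardinality of a non-meager subset of ℕ → ℕ. -/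
open Cardinal Set

/-- The uniformity of the meager ideal: least cardinality of a non-meager set. -/
noncomputable def unifMeager (X : Type) [TopologicalSpace X] : Cardinal :=
  sInf {c : Cardinal | ∃ S : Set X, ¬ IsMeagre S ∧ c = #S}

lemma my_isGδ_preimage {X Y : Type*} [TopologicalSpace X] [TopologicalSpace Y] {f : X → Y}
    (hf : Continuous f) {s : Set Y} (hs : IsGδ s) : IsGδ (f ⁻¹' s) := by
  obtain ⟨T, hT, hct, rfl⟩ := hs
  rw [sInter_eq_biInter, preimage_iInter₂]
  exact IsGδ.biInter hct fun t ht => ((hT t ht).preimage hf).isGδ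

theorem invariant_gdelta_char_le_unifMeager
    (R : Set ((ℕ → ℕ) × (ℕ → ℕ))) (hGδ : IsGδ R)
    (hinv : ∀ x x' y : ℕ → ℕ, {n : ℕ | x n ≠ x' n}.Finite → (x, y) ∈ R → (x', y) ∈ R)
    (htot : ∀ y : ℕ → ℕ, ∃ x : ℕ → ℕ, (x, y) ∈ R) :
    sInf {c : Cardinal | ∃ 𝒳 : Set (ℕ → ℕ),
        (∀ y : ℕ → ℕ, ∃ x ∈ 𝒳, (x, y) ∈ R) ∧ c = #𝒳} ≤ unifMeager (ℕ → ℕ) := by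
  -- every section R_y is a dense Gδ, hence residual
  have hres : ∀ y : ℕ → ℕ, {x | (x, y) ∈ R} ∈ residual (ℕ → ℕ) := by
    intro y
    have hGy : IsGδ {x : ℕ → ℕ | (x, y) ∈ R} := by
      have : Continuous (fun x : ℕ → ℕ => (x, y)) := by continuity
      exact my_isGδ_preimage this hGδ
    obtain ⟨x₀, hx₀⟩ := htot y
    have hdense : Dense {x : ℕ → ℕ | (x, y) ∈ R} := by
      intro z
      have htend : Filter.Tendsto (fun n : ℕ => fun k : ℕ => if k < n then z k else x₀ k)
          Filter.atTop (nhds z) := by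
        rw [tendsto_pi_nhds]
        intro k
        apply Filter.Tendsto.congr' _ tendsto_const_nhds
        filter_upwards [Filter.eventually_ge_atTop (k + 1)] with n hn
        simp [Nat.lt_of_succ_le hn]
      refine mem_closure_of_tendsto htend (Filter.Eventually.of_forall fun n => ?_)
      refine hinv x₀ _ y ?_ hx₀
      refine (Set.finite_Iio n).subset fun k hk => ?_
      simp only [mem_setOf_eq] at hk
      by_contra hkn
      exact hk (if_neg (by simpa using hkn)).symm
    exact residual_of_dense_Gδ hGy hdense
  -- the covering set can be any non-meager set
  have hsub : {c : Cardinal | ∃ S : Set (ℕ → ℕ), ¬ IsMeagre S ∧ c = #S} ⊆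
      {c : Cardinal | ∃ 𝒳 : Set (ℕ → ℕ), (∀ y : ℕ → ℕ, ∃ x ∈ 𝒳, (x, y) ∈ R) ∧ c = #𝒳} := by
    rintro c ⟨S, hS, rfl⟩
    refine ⟨S, fun y => ?_, rfl⟩
    by_contra h
    push_neg at h
    have : S ⊆ {x | (x, y) ∈ R}ᶜ := fun x hx => h x hx
    exact hS (IsMeagre.mono this (by simpa [IsMeagre] using hres y))
  have hne : {c : Cardinal | ∃ S : Set (ℕ → ℕ), ¬ IsMeagre S ∧ c = #S}.Nonempty := by
    refine ⟨#(univ : Set (ℕ → ℕ)), univ, fun h => ?_, rfl⟩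
    have : Dense (∅ : Set (ℕ → ℕ)) := dense_of_mem_residual (by simpa [IsMeagre] using h)
    simpa using this.nonempty
  exact csInf_le_csInf (OrderBot.bddBelow _) hne hsub
end

section
/- The splitting number 𝔰 is at most the least cardinality of a non-meager subset of Cantor space ℕ → Bool: 𝔰 ≤ unif(ℳ), where unif(ℳ) is computed in ℕ → Bool with the product topology. -/
open Cardinal Set

/-- The splitting number 𝔰. -/
noncomputable def splitNum : Cardinal :=
  sInf {c : Cardinal | ∃ S : Set (Set ℕ),
    (∀ Y : Set ℕ, Y.Infinite → ∃ X ∈ S, Splits X Y) ∧ c = #S}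

/-- For infinite `Y` and fixed `b`, the functions taking value `b` only finitely often on `Y`
form a meagre set. -/
lemma meagre_finite_fiber (Y : Set ℕ) (hY : Y.Infinite) (b : Bool) :
    IsMeagre {f : ℕ → Bool | {n | n ∈ Y ∧ f n = b}.Finite} := by
  set C : ℕ → Set (ℕ → Bool) := fun N => {f | ∀ n, n ∈ Y → N ≤ n → f n ≠ b} with hC
  have hsub : {f : ℕ → Bool | {n | n ∈ Y ∧ f n = b}.Finite} ⊆ ⋃ N, C N := by
    intro f hf
    obtain ⟨N, hN⟩ := hf.bddAbove
    refine mem_iUnion.2 ⟨N + 1, fun n hn hNn hfn => ?_⟩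
    have := hN (show n ∈ {n | n ∈ Y ∧ f n = b} from ⟨hn, hfn⟩)
    omega
  refine IsMeagre.mono hsub (isMeagre_iUnion fun N => ?_)
  -- each C N is closed with empty interior, hence nowhere dense, hence meagre
  have hclosed : IsClosed (C N) := by
    have : C N = ⋂ n ∈ {n | n ∈ Y ∧ N ≤ n}, (fun f : ℕ → Bool => f n) ⁻¹' {b}ᶜ := by
      ext f
      simp only [hC, mem_setOf_eq, mem_iInter, mem_preimage, mem_compl_iff, mem_singleton_iff]
      tauto
    rw [this]
    exact isClosed_biInter fun n _ =>
      (isClosed_discrete _).preimage (continuous_apply n)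
  have hint : interior (C N) = ∅ := by
    by_contra h
    obtain ⟨g, hg⟩ := nonempty_iff_ne_empty.2 h
    obtain ⟨I, u, hu, hpi⟩ := isOpen_pi_iff.1 isOpen_interior g hg
    -- pick y ∈ Y with y ≥ N and y ∉ I
    obtain ⟨y, hyY, hy⟩ : ∃ y ∈ Y, y ∉ (↑I ∪ {n | n < N} : Set ℕ) := by
      have : (Y \ (↑I ∪ {n | n < N})).Nonempty :=
        (hY.diff ((I.finite_toSet).union (finite_lt_nat N))).nonempty
      obtain ⟨y, hy1, hy2⟩ := this
      exact ⟨y, hy1, hy2⟩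
    have hyI : y ∉ (I : Set ℕ) := fun h => hy (Or.inl h)
    have hyN : N ≤ y := not_lt.1 fun h => hy (Or.inr h)
    have hmem : Function.update g y b ∈ (I : Set ℕ).pi u := by
      intro i hi
      rw [Function.update_of_ne (by rintro rfl; exact hyI hi)]
      exact (hu i hi).2
    have : Function.update g y b ∈ C N := interior_subset (hpi hmem)
    exact this y hyY hyN (Function.update_self y b g)
  have : IsNowhereDense (C N) := hclosed.isNowhereDense_iff.2 hint
  rw [IsMeagre]
  exact residual_of_dense_open ((isClosed_isNowhereDense_iff_compl).1 ⟨hclosed, this⟩).1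
    ((isClosed_isNowhereDense_iff_compl).1 ⟨hclosed, this⟩).2

lemma IsMeagre.union' {X : Type} [TopologicalSpace X] {s t : Set X}
    (hs : IsMeagre s) (ht : IsMeagre t) : IsMeagre (s ∪ t) := by
  rw [IsMeagre, compl_union]; exact Filter.inter_mem hs ht

theorem splitNum_le_unifMeager : splitNum ≤ unifMeager (ℕ → Bool) := by
  have hne : {c : Cardinal | ∃ S : Set (ℕ → Bool), ¬ IsMeagre S ∧ c = #S}.Nonempty := by
    refine ⟨#(univ : Set (ℕ → Bool)), univ, ?_, rfl⟩
    intro h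
    rw [IsMeagre, compl_univ] at h
    have := dense_of_mem_residual h
    simpa using this.nonempty
  refine le_csInf hne ?_
  rintro c ⟨S, hS, rfl⟩
  have hfam : ∀ Y : Set ℕ, Y.Infinite →
      ∃ X ∈ (fun f : ℕ → Bool => {n | f n = true}) '' S, Splits X Y := by
    intro Y hY
    by_contra hno
    push_neg at hno
    apply hS
    refine IsMeagre.mono ?_ ((meagre_finite_fiber Y hY true).union'
      (meagre_finite_fiber Y hY false))
    intro f hf
    have hns : ¬ Splits {n | f n = true} Y := by
      simpa using hno {n | f n = true} ⟨f, hf, rfl⟩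
    rw [Splits, not_and_or] at hns
    rcases hns with h | h
    · left
      rw [not_infinite] at h
      exact h.subset fun n hn => ⟨hn.2, hn.1⟩
    · right
      rw [not_infinite] at h
      refine h.subset fun n hn => ⟨hn.1, ?_⟩
      simpa using hn.2
  calc splitNum ≤ #((fun f : ℕ → Bool => {n | f n = true}) '' S) :=
        csInf_le (OrderBot.bddBelow _) ⟨_, hfam, rfl⟩
    _ ≤ #S := mk_image_le
end

section
/- The covering number of the Lebesgue null ideal is at most the uniformity of the meager ideal of ℝ: the least cardinality of a family of Lebesgue null subsets of ℝ whose union is all of ℝ is less than or equal to the least cardinality of a non-meager subset of ℝ. -/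
open Cardinal Set MeasureTheory Pointwise

/-- The covering number of the Lebesgue null ideal of ℝ. -/
noncomputable def covNull : Cardinal :=
  sInf {c : Cardinal | ∃ F : Set (Set ℝ),
    (∀ s ∈ F, MeasureTheory.volume s = 0) ∧ ⋃₀ F = Set.univ ∧ c = #F}

/-- The uniformity of the meager ideal of ℝ: least cardinality of a non-meager set. -/
noncomputable def unifMeagerReal : Cardinal :=
  sInf {c : Cardinal | ∃ S : Set ℝ, ¬ IsMeagre S ∧ c = #S}

/-!
There is a comeagre null set `E ⊆ ℝ`. If `X` is not meagre then for every `z` the comeagre set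
`z - E` meets `X`, so the translates `x + E`, `x ∈ X`, are at most `#X` null sets covering `ℝ`.
-/

theorem Set.inter_nonempty_of_not_isMeagre_of_mem_residual {α : Type*} [TopologicalSpace α]
    {s t : Set α} (hs : ¬IsMeagre s) (ht : t ∈ residual α) : (s ∩ t).Nonempty := by
  rw [← not_disjoint_iff_nonempty_inter]
  intro hst
  have htc : IsMeagre tᶜ := by rwa [IsMeagre, compl_compl]
  exact hs (htc.mono hst.subset_compl_right)

theorem sUnion_image_vadd_eq_univ_of_mem_residual {G : Type*} [TopologicalSpace G] [AddGroup G]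
    [IsTopologicalAddGroup G] {E X : Set G} (hE : E ∈ residual G) (hX : ¬IsMeagre X) :
    ⋃₀ ((· +ᵥ E) '' X) = Set.univ := by
  refine eq_univ_of_forall fun z ↦ ?_
  let h := (Homeomorph.neg G).trans (Homeomorph.addRight z)
  have hzE : h ⁻¹' E ∈ residual G := tendsto_residual_of_isOpenMap h.continuous h.isOpenMap hE
  obtain ⟨x, hxX, hxE⟩ := inter_nonempty_of_not_isMeagre_of_mem_residual hX hzE
  exact ⟨x +ᵥ E, mem_image_of_mem _ hxX, -x + z, hxE, add_neg_cancel_left x z⟩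

theorem Real.exists_volume_eq_zero_mem_residual : ∃ E : Set ℝ, E ∈ residual ℝ ∧ volume E = 0 := by
  obtain ⟨E, hE, T, hT, hET⟩ := Filter.disjoint_iff.mp Real.disjoint_residual_ae
  exact ⟨E, hE, measure_mono_null hET.subset_compl_right (mem_ae_iff.mp hT)⟩

theorem covNull_le_mk_of_not_isMeagre {X : Set ℝ} (hX : ¬IsMeagre X) : covNull ≤ #X := by
  obtain ⟨E, hE, hEnull⟩ := Real.exists_volume_eq_zero_mem_residual
  have hnull : ∀ s ∈ (· +ᵥ E) '' X, volume s = 0 := by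
    rintro _ ⟨x, -, rfl⟩
    rwa [measure_vadd]
  calc covNull ≤ #((· +ᵥ E) '' X) :=
        csInf_le' ⟨_, hnull, sUnion_image_vadd_eq_univ_of_mem_residual hE hX, rfl⟩
    _ ≤ #X := mk_image_le

theorem covNull_le_unifMeagerReal : covNull ≤ unifMeagerReal := by
  refine le_csInf ⟨_, Set.univ, not_isMeagre_of_isOpen isOpen_univ univ_nonempty, rfl⟩ ?_
  rintro _ ⟨X, hX, rfl⟩
  exact covNull_le_mk_of_not_isMeagre hX
end

section
/- The partition characteristic 𝐩𝐚𝐫 equals the minimum of the bounding number 𝔟 and the splitting number 𝔰: 𝐩𝐚𝐫 = min{𝔟, 𝔰}. -/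
open Cardinal Set Filter

/-- `H` is homogeneous for the 2-coloring `c` of pairs. -/
def Homog2 (c : Finset ℕ → Bool) (H : Set ℕ) : Prop :=
  ∃ i : Bool, ∀ a ∈ H, ∀ b ∈ H, a ≠ b → c {a, b} = i

/-- `H` is almost homogeneous for `c`: homogeneous after removing a finite subset. -/
def AlmostHomog2 (c : Finset ℕ → Bool) (H : Set ℕ) : Prop :=
  ∃ F : Set ℕ, F.Finite ∧ F ⊆ H ∧ Homog2 c (H \ F)

/-- The partition characteristic 𝐩𝐚𝐫. -/
noncomputable def parNum : Cardinal :=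
  sInf {κ : Cardinal | ∃ P : Set (Finset ℕ → Bool),
    (¬ ∃ H : Set ℕ, H.Infinite ∧ ∀ c ∈ P, AlmostHomog2 c H) ∧ κ = #P}

/-- The bounding number 𝔟. -/
noncomputable def boundNum : Cardinal :=
  sInf {c : Cardinal | ∃ B : Set (ℕ → ℕ),
    (∀ g : ℕ → ℕ, ∃ f ∈ B, ¬ EvMaj g f) ∧ c = #B}

/-! ### Auxiliary machinery -/

lemma pair_forall {Q : ℕ → ℕ → Prop} {a b : ℕ} (hab : a < b) :
    (∀ x ∈ ({a, b} : Finset ℕ), ∀ y ∈ ({a, b} : Finset ℕ), x < y → Q x y) ↔ Q a b := by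
  constructor
  · intro h
    exact h a (Finset.mem_insert_self a {b}) b
      (Finset.mem_insert_of_mem (Finset.mem_singleton_self b)) hab
  · intro h x hx y hy hxy
    have hx' : x = a ∨ x = b := by simpa using hx
    have hy' : y = a ∨ y = b := by simpa using hy
    rcases hx' with rfl | rfl <;> rcases hy' with rfl | rfl
    · exact absurd hxy (by omega)
    · exact h
    · exact absurd hxy (by omega)
    · exact absurd hxy (by omega)

open Classical in
/-- The canonical coloring induced by a binary relation, evaluated on `{a,b}` with
`a < b` as `Q a b`. -/
noncomputable def cOf (Q : ℕ → ℕ → Prop) : Finset ℕ → Bool :=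
  fun s => if ∀ x ∈ s, ∀ y ∈ s, x < y → Q x y then true else false

lemma cOf_pair {Q : ℕ → ℕ → Prop} {a b : ℕ} (hab : a < b) :
    cOf Q {a, b} = true ↔ Q a b := by
  unfold cOf
  split
  · simpa using (pair_forall hab).mp ‹_›
  · simpa using fun h => ‹¬_› ((pair_forall hab).mpr h)

lemma cOf_pair_false {Q : ℕ → ℕ → Prop} {a b : ℕ} (hab : a < b) :
    cOf Q {a, b} = false ↔ ¬ Q a b := by
  rw [← not_iff_not, not_not, ← cOf_pair (Q := Q) hab]
  simp

/-- A finite set of naturals has a strict upper bound. -/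
lemma exists_bound {F : Set ℕ} (hF : F.Finite) : ∃ N, ∀ x ∈ F, x < N := by
  obtain ⟨N, hN⟩ := hF.bddAbove
  exact ⟨N + 1, fun x hx => Nat.lt_succ_of_le (hN hx)⟩

/-- The bounding-set is nonempty. -/
lemma boundSet_nonempty :
    {c : Cardinal | ∃ B : Set (ℕ → ℕ),
      (∀ g : ℕ → ℕ, ∃ f ∈ B, ¬ EvMaj g f) ∧ c = #B}.Nonempty := by
  refine ⟨#(univ : Set (ℕ → ℕ)), ⟨univ, fun g => ⟨g, mem_univ g, ?_⟩, rfl⟩⟩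
  intro h
  obtain ⟨N, hN⟩ := eventually_atTop.mp h
  exact lt_irrefl _ (hN N le_rfl)

lemma nth_infinite {Y : Set ℕ} (hY : Y.Infinite) : {n | n ∈ Y}.Infinite := hY

/-- Every infinite set of naturals is split by some set. -/
lemma exists_splits {Y : Set ℕ} (hY : Y.Infinite) : ∃ X : Set ℕ, Splits X Y := by
  set e := Nat.nth (· ∈ Y) with he
  have hmono : StrictMono e := Nat.nth_strictMono hY
  have hmem : ∀ n, e n ∈ Y := Nat.nth_mem_of_infinite hY
  refine ⟨range (fun k => e (2 * k)), ?_, ?_⟩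
  · have hsub : range (fun k => e (2 * k)) ⊆ Y := by
      rintro x ⟨k, rfl⟩; exact hmem _
    have : (range (fun k => e (2 * k))).Infinite :=
      infinite_range_of_injective (fun i j hij => by
        have := hmono.injective hij; omega)
    rwa [inter_eq_self_of_subset_left hsub]
  · have : range (fun k => e (2 * k + 1)) ⊆ Y \ range (fun k => e (2 * k)) := by
      rintro x ⟨k, rfl⟩
      refine ⟨hmem _, ?_⟩
      rintro ⟨m, hm⟩
      have := hmono.injective hm; omega
    exact (infinite_range_of_injective (fun i j hij => by
      have := hmono.injective hij; omega)).mono this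

lemma splitSet_nonempty :
    {c : Cardinal | ∃ S : Set (Set ℕ),
      (∀ Y : Set ℕ, Y.Infinite → ∃ X ∈ S, Splits X Y) ∧ c = #S}.Nonempty := by
  refine ⟨#(univ : Set (Set ℕ)), ⟨univ, fun Y hY => ?_, rfl⟩⟩
  obtain ⟨X, hX⟩ := exists_splits hY
  exact ⟨X, mem_univ X, hX⟩

/-- No infinite set is almost homogeneous for all colorings. -/
lemma parSet_nonempty :
    {κ : Cardinal | ∃ P : Set (Finset ℕ → Bool),
      (¬ ∃ H : Set ℕ, H.Infinite ∧ ∀ c ∈ P, AlmostHomog2 c H) ∧ κ = #P}.Nonempty := by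
  classical
  refine ⟨#(univ : Set (Finset ℕ → Bool)), ⟨univ, ?_, rfl⟩⟩
  rintro ⟨H, hH, hall⟩
  set e := Nat.nth (· ∈ H) with he
  have hmono : StrictMono e := Nat.nth_strictMono hH
  have hmem : ∀ n, e n ∈ H := Nat.nth_mem_of_infinite hH
  have hcount : ∀ n, Nat.count (· ∈ H) (e n) = n := Nat.count_nth_of_infinite hH
  set c := cOf (fun a _ => Even (Nat.count (· ∈ H) a)) with hc
  obtain ⟨F, hFfin, _, i, hi⟩ := hall c (mem_univ c)
  obtain ⟨N, hN⟩ := exists_bound hFfin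
  -- pick an index m with e m ≥ N
  obtain ⟨x, hxH, hxN⟩ := hH.exists_gt N
  set m := Nat.count (· ∈ H) x with hm
  have hex : e m = x := Nat.nth_count hxH
  have hgt : ∀ k, m ≤ k → e k ∈ H \ F := by
    intro k hk
    have : N < e k := lt_of_lt_of_le hxN (hex ▸ hmono.monotone hk)
    exact ⟨hmem k, fun hf => absurd (hN _ hf) (by omega)⟩
  -- pairs (e m, e (m+1)) and (e (m+1), e (m+2)) get different colors
  have h1 : c {e m, e (m + 1)} = i :=
    hi _ (hgt m le_rfl) _ (hgt (m + 1) (by omega)) (fun h => by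
      have := hmono.injective h; omega)
  have h2 : c {e (m + 1), e (m + 2)} = i :=
    hi _ (hgt (m + 1) (by omega)) _ (hgt (m + 2) (by omega)) (fun h => by
      have := hmono.injective h; omega)
  have e1 : c {e m, e (m + 1)} = true ↔ Even m := by
    rw [hc, cOf_pair (hmono (by omega))]
    rw [hcount]
  have e2 : c {e (m + 1), e (m + 2)} = true ↔ Even (m + 1) := by
    rw [hc, cOf_pair (hmono (by omega))]
    rw [hcount]
  rcases Nat.even_or_odd m with hev | hod
  · have : i = true := h1 ▸ e1.mpr hev
    rw [h2, this] at e2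
    exact (Nat.even_add_one.mp (e2.mp rfl)) hev
  · have hne : c {e m, e (m + 1)} ≠ true := fun h => (Nat.not_even_iff_odd.mpr hod) (e1.mp h)
    have : i = false := by cases i; rfl; exact absurd h1 hne
    rw [h2, this] at e2
    have : Even (m + 1) := Nat.even_add_one.mpr (Nat.not_even_iff_odd.mpr hod)
    exact absurd (e2.mpr this) (by simp)

/-- Monotone majorant of `f`. -/
def fb (f : ℕ → ℕ) (n : ℕ) : ℕ := (Finset.range (n + 1)).sup f

lemma fb_self_le (f : ℕ → ℕ) (n : ℕ) : f n ≤ fb f n :=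
  Finset.le_sup (Finset.mem_range.mpr (by omega))

lemma fb_mono (f : ℕ → ℕ) {m n : ℕ} (h : m ≤ n) : fb f m ≤ fb f n :=
  Finset.sup_mono (Finset.range_subset_range.mpr (by omega))

lemma parNum_le_boundNum : parNum ≤ boundNum := by
  obtain ⟨B, hB, hBcard⟩ := csInf_mem boundSet_nonempty
  set P := (fun f => cOf (fun a b => fb f a < b)) '' B with hP
  have hnoH : ¬ ∃ H : Set ℕ, H.Infinite ∧ ∀ c ∈ P, AlmostHomog2 c H := by
    rintro ⟨H, hH, hall⟩
    have hgex : ∀ n : ℕ, ∃ b, b ∈ H ∧ ∃ a ∈ H, n < a ∧ a < b := by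
      intro n
      obtain ⟨a, haH, han⟩ := hH.exists_gt n
      obtain ⟨b, hbH, hba⟩ := hH.exists_gt a
      exact ⟨b, hbH, a, haH, han, hba⟩
    choose g hgH hg using hgex
    obtain ⟨f, hfB, hfnm⟩ := hB g
    apply hfnm
    obtain ⟨F, hFfin, hFsub, i, hi⟩ := hall _ ⟨f, hfB, rfl⟩
    obtain ⟨N, hN⟩ := exists_bound hFfin
    have hHF : (H \ F).Infinite := hH.diff hFfin
    have hmemHF : ∀ x, x ∈ H → N ≤ x → x ∈ H \ F :=
      fun x hx hNx => ⟨hx, fun hxF => absurd (hN x hxF) (by omega)⟩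
    have hitrue : i = true := by
      obtain ⟨a, haHF, haN⟩ := hHF.exists_gt N
      obtain ⟨b, hbHF, hab⟩ := hHF.exists_gt (max a (fb f a))
      have h1 : a < b := lt_of_le_of_lt (le_max_left _ _) hab
      have h2 : fb f a < b := lt_of_le_of_lt (le_max_right _ _) hab
      have := hi a haHF b hbHF (by omega)
      rw [← this, cOf_pair h1]
      exact h2
    rw [EvMaj, eventually_atTop]
    refine ⟨N, fun n hn => ?_⟩
    obtain ⟨a, haH, hna, hab⟩ := hg n
    have haHF : a ∈ H \ F := hmemHF a haH (by omega)
    have hbHF : g n ∈ H \ F := hmemHF _ (hgH n) (by omega)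
    have := hi a haHF (g n) hbHF (by omega)
    rw [hitrue] at this
    have hkey : fb f a < g n := (cOf_pair hab).mp this
    calc f n ≤ fb f n := fb_self_le f n
      _ ≤ fb f a := fb_mono f (by omega)
      _ < g n := hkey
  calc parNum ≤ #P := csInf_le' ⟨P, hnoH, rfl⟩
    _ ≤ #B := mk_image_le
    _ = boundNum := hBcard.symm

lemma parNum_le_splitNum : parNum ≤ splitNum := by
  obtain ⟨S, hS, hScard⟩ := csInf_mem splitSet_nonempty
  set P := (fun X : Set ℕ => cOf (fun a _ => a ∈ X)) '' S with hP
  have hnoH : ¬ ∃ H : Set ℕ, H.Infinite ∧ ∀ c ∈ P, AlmostHomog2 c H := by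
    rintro ⟨H, hH, hall⟩
    obtain ⟨X, hXS, hsplit⟩ := hS H hH
    obtain ⟨F, hFfin, hFsub, i, hi⟩ := hall _ ⟨X, hXS, rfl⟩
    have hHF : (H \ F).Infinite := hH.diff hFfin
    cases i with
    | true =>
      have hsub : H \ F ⊆ X := by
        intro a ha
        obtain ⟨b, hb, hab⟩ := hHF.exists_gt a
        have := hi a ha b hb (by omega)
        exact (cOf_pair hab).mp this
      have : H \ X ⊆ F := by
        intro x ⟨hxH, hxX⟩
        by_contra hxF
        exact hxX (hsub ⟨hxH, hxF⟩)
      exact (hFfin.subset this).not_infinite hsplit.2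
    | false =>
      have hsub : ∀ a ∈ H \ F, a ∉ X := by
        intro a ha
        obtain ⟨b, hb, hab⟩ := hHF.exists_gt a
        have := hi a ha b hb (by omega)
        exact (cOf_pair_false hab).mp this
      have : X ∩ H ⊆ F := by
        intro x ⟨hxX, hxH⟩
        by_contra hxF
        exact hsub x ⟨hxH, hxF⟩ hxX
      exact (hFfin.subset this).not_infinite hsplit.1
  calc parNum ≤ #P := csInf_le' ⟨P, hnoH, rfl⟩
    _ ≤ #S := mk_image_le
    _ = splitNum := hScard.symm

/-! ### Diagonalization against countably many sets -/

open Classical in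
noncomputable def diagSeq (X : ℕ → Set ℕ) : ℕ → Set ℕ
  | 0 => univ
  | n + 1 =>
      if ((diagSeq X n) ∩ X n).Infinite then (diagSeq X n) ∩ X n
      else (diagSeq X n) \ X n

lemma diagSeq_infinite (X : ℕ → Set ℕ) : ∀ n, (diagSeq X n).Infinite := by
  intro n
  induction n with
  | zero => exact infinite_univ
  | succ n ih =>
    rw [diagSeq]
    split
    · assumption
    · have hfin : ((diagSeq X n) ∩ X n).Finite := not_infinite.mp ‹_›
      have := ih.diff hfin
      refine this.mono ?_
      intro x ⟨hx1, hx2⟩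
      exact ⟨hx1, fun hX => hx2 ⟨hx1, hX⟩⟩

lemma diagSeq_succ_subset (X : ℕ → Set ℕ) (n : ℕ) :
    diagSeq X (n + 1) ⊆ diagSeq X n := by
  rw [diagSeq]; split
  · exact inter_subset_left
  · exact diff_subset

lemma diagSeq_antitone (X : ℕ → Set ℕ) : ∀ {m n : ℕ}, m ≤ n → diagSeq X n ⊆ diagSeq X m := by
  intro m n h
  induction n with
  | zero => rw [Nat.le_zero.mp h]
  | succ n ih =>
    rcases Nat.lt_or_ge m (n + 1) with h' | h'
    · exact (diagSeq_succ_subset X n).trans (ih (by omega))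
    · rw [(by omega : m = n + 1)]

lemma diagSeq_decides (X : ℕ → Set ℕ) (n : ℕ) :
    diagSeq X (n + 1) ⊆ X n ∨ ∀ x ∈ diagSeq X (n + 1), x ∉ X n := by
  rw [diagSeq]; split
  · exact Or.inl inter_subset_right
  · exact Or.inr (fun x hx => hx.2)

lemma diag_unsplit (X : ℕ → Set ℕ) :
    ∃ Y : Set ℕ, Y.Infinite ∧ ∀ n, ¬ Splits (X n) Y := by
  have hch : ∀ n k : ℕ, ∃ b, b ∈ diagSeq X n ∧ k < b := by
    intro n k
    obtain ⟨b, hb, hkb⟩ := (diagSeq_infinite X n).exists_gt k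
    exact ⟨b, hb, hkb⟩
  choose F hF1 hF2 using hch
  set a : ℕ → ℕ := fun n => Nat.rec (F 0 0) (fun m prev => F (m + 1) prev) n with ha
  have ha0 : a 0 = F 0 0 := rfl
  have hasucc : ∀ n, a (n + 1) = F (n + 1) (a n) := fun n => rfl
  have hamem : ∀ n, a n ∈ diagSeq X n := by
    intro n; cases n with
    | zero => exact hF1 0 0
    | succ n => rw [hasucc]; exact hF1 _ _
  have hamono : StrictMono a := strictMono_nat_of_lt_succ (fun n => by
    rw [hasucc]; exact hF2 _ _)
  refine ⟨range a, infinite_range_of_injective hamono.injective, ?_⟩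
  intro n hsplit
  have hbig : ∀ m, n + 1 ≤ m → a m ∈ diagSeq X (n + 1) :=
    fun m hm => diagSeq_antitone X hm (hamem m)
  have hfin : (a '' (Iic n)).Finite := (finite_Iic n).image a
  rcases diagSeq_decides X n with hin | hout
  · -- Y \ X n is finite
    have : range a \ X n ⊆ a '' (Iic n) := by
      rintro x ⟨⟨m, rfl⟩, hxX⟩
      rcases Nat.lt_or_ge n m with h' | h'
      · exact absurd (hin (hbig m (by omega))) hxX
      · exact ⟨m, by simpa using h', rfl⟩
    exact (hfin.subset this).not_infinite hsplit.2
  · -- X n ∩ Y is finite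
    have : X n ∩ range a ⊆ a '' (Iic n) := by
      rintro x ⟨hxX, ⟨m, rfl⟩⟩
      rcases Nat.lt_or_ge n m with h' | h'
      · exact absurd hxX (hout _ (hbig m (by omega)))
      · exact ⟨m, by simpa using h', rfl⟩
    exact (hfin.subset this).not_infinite hsplit.1

lemma aleph0_lt_splitNum : ℵ₀ < splitNum := by
  rw [lt_iff_not_ge]
  intro hle
  obtain ⟨S, hS, hScard⟩ := csInf_mem splitSet_nonempty
  rw [splitNum, hScard] at hle
  have hcount : S.Countable := by
    rwa [← Set.countable_coe_iff, ← Cardinal.mk_le_aleph0_iff]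
  rcases S.eq_empty_or_nonempty with rfl | hne
  · obtain ⟨X, hX, -⟩ := hS univ infinite_univ
    exact hX
  · obtain ⟨X, hXeq⟩ := hcount.exists_eq_range hne
    obtain ⟨Y, hYinf, hY⟩ := diag_unsplit X
    obtain ⟨X', hX'S, hsplit⟩ := hS Y hYinf
    rw [hXeq] at hX'S
    obtain ⟨n, rfl⟩ := hX'S
    exact hY n hsplit

lemma exists_dominating (B : Set (ℕ → ℕ)) (hB : #B < boundNum) :
    ∃ g : ℕ → ℕ, ∀ f ∈ B, EvMaj g f := by
  by_contra h
  push_neg at h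
  have : boundNum ≤ #B := csInf_le' ⟨B, fun g => h g, rfl⟩
  exact absurd hB (not_lt.mpr this)

/-- Fewer than `splitNum` sets cannot split every infinite subset of a given
infinite set: some infinite `Y ⊆ Y₀` is unsplit by all of them. -/
lemma exists_unsplit (S : Set (Set ℕ)) (hS : #S < splitNum) {Y₀ : Set ℕ}
    (hY₀ : Y₀.Infinite) : ∃ Y, Y ⊆ Y₀ ∧ Y.Infinite ∧ ∀ X ∈ S, ¬ Splits X Y := by
  by_contra h
  push_neg at h
  set e := Nat.nth (· ∈ Y₀) with he
  have hmono : StrictMono e := Nat.nth_strictMono hY₀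
  have hrange : range e = Y₀ := Nat.range_nth_of_infinite hY₀
  set S' := (fun X : Set ℕ => e ⁻¹' X) '' S with hS'
  have hsplitting : ∀ W : Set ℕ, W.Infinite → ∃ X' ∈ S', Splits X' W := by
    intro W hW
    have hWY : e '' W ⊆ Y₀ := by rw [← hrange]; exact image_subset_range e W
    have hWinf : (e '' W).Infinite := hW.image (hmono.injective.injOn)
    obtain ⟨X, hXS, hsplit⟩ := h (e '' W) hWY hWinf
    refine ⟨e ⁻¹' X, ⟨X, hXS, rfl⟩, ?_, ?_⟩
    · have hsub : X ∩ e '' W ⊆ e '' (e ⁻¹' X ∩ W) := by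
        rintro x ⟨hxX, w, hwW, rfl⟩
        exact ⟨w, ⟨hxX, hwW⟩, rfl⟩
      exact Set.Infinite.of_image e ((hsplit.1.mono hsub))
    · have hsub : e '' W \ X ⊆ e '' (W \ e ⁻¹' X) := by
        rintro x ⟨⟨w, hwW, rfl⟩, hxX⟩
        exact ⟨w, ⟨hwW, hxX⟩, rfl⟩
      exact Set.Infinite.of_image e ((hsplit.2.mono hsub))
  have : splitNum ≤ #S' := csInf_le' ⟨S', hsplitting, rfl⟩
  exact absurd hS (not_lt.mpr (this.trans mk_image_le))

/-- Fewer than `min 𝔟 𝔰` colorings admit a common almost homogeneous set. -/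
lemma exists_common_almostHomog (P : Set (Finset ℕ → Bool))
    (hb : #P < boundNum) (hs : #P < splitNum) :
    ∃ H : Set ℕ, H.Infinite ∧ ∀ c ∈ P, AlmostHomog2 c H := by
  classical
  -- the sections of the colorings
  set Xcn : (Finset ℕ → Bool) → ℕ → Set ℕ := fun c n => {b | c {n, b} = true} with hXcn
  set S₁ : Set (Set ℕ) := range (fun q : P × ℕ => Xcn q.1.1 q.2) with hS₁
  have hS₁card : #S₁ < splitNum := by
    calc #S₁ ≤ #(P × ℕ) := mk_range_le
      _ = #P * ℵ₀ := by rw [Cardinal.mk_prod]; simp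
      _ ≤ max (max #P ℵ₀) ℵ₀ := Cardinal.mul_le_max _ _
      _ < splitNum := max_lt (max_lt hs aleph0_lt_splitNum) aleph0_lt_splitNum
  -- Step 1: a set Y on which every coloring is stable
  obtain ⟨Y, -, hYinf, hYun⟩ := exists_unsplit S₁ hS₁card infinite_univ
  -- the limit colors
  set ℓ : (Finset ℕ → Bool) → ℕ → Bool :=
    fun c n => if (Y \ Xcn c n).Finite then true else false with hℓ
  have hstab : ∀ (c : P) (n : ℕ), ∃ N, ∀ b, N ≤ b → b ∈ Y → c.1 {n, b} = ℓ c.1 n := by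
    rintro ⟨c, hc⟩ n
    have hun := hYun (Xcn c n) ⟨(⟨⟨c, hc⟩, n⟩ : P × ℕ), rfl⟩
    rw [Splits, not_and_or, not_infinite, not_infinite] at hun
    by_cases hfin : (Y \ Xcn c n).Finite
    · obtain ⟨N, hN⟩ := exists_bound hfin
      refine ⟨N, fun b hb hbY => ?_⟩
      show c {n, b} = ℓ c n
      have hbX : b ∈ Xcn c n := by
        by_contra hbX
        exact absurd (hN b ⟨hbY, hbX⟩) (by omega)
      have : c {n, b} = true := hbX
      rw [this, hℓ]
      simp [hfin]
    · have hfin' : (Xcn c n ∩ Y).Finite := hun.resolve_right hfin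
      obtain ⟨N, hN⟩ := exists_bound hfin'
      refine ⟨N, fun b hb hbY => ?_⟩
      show c {n, b} = ℓ c n
      have hbX : b ∉ Xcn c n := by
        intro hbX
        exact absurd (hN b ⟨hbX, hbY⟩) (by omega)
      have : c {n, b} = false := by
        cases h : c {n, b}
        · rfl
        · exact absurd h hbX
      rw [this, hℓ]
      simp [hfin]
  choose N₀ hN₀ using hstab
  -- Step 2: a set Z ⊆ Y on which each limit coloring is constant
  set S₂ : Set (Set ℕ) := range (fun c : P => {n | ℓ c.1 n = true}) with hS₂
  have hS₂card : #S₂ < splitNum := lt_of_le_of_lt mk_range_le hs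
  obtain ⟨Z, hZY, hZinf, hZun⟩ := exists_unsplit S₂ hS₂card hYinf
  -- Step 3: the bounding functions, and a dominating function
  set M : P → ℕ → ℕ := fun c n => (Finset.range (n + 1)).sup (N₀ c) with hM
  have hMprop : ∀ (c : P) (n b : ℕ), M c n ≤ b → b ∈ Y →
      ∀ n' ≤ n, c.1 {n', b} = ℓ c.1 n' := by
    intro c n b hMb hbY n' hn'
    refine hN₀ c n' b (le_trans ?_ hMb) hbY
    exact Finset.le_sup (Finset.mem_range.mpr (by omega))
  obtain ⟨g, hg⟩ := exists_dominating (range (fun c : P => M c))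
    (lt_of_le_of_lt mk_range_le hb)
  -- Step 4: build H ⊆ Z thin with respect to g
  have hch : ∀ k : ℕ, ∃ b, b ∈ Z ∧ k < b := fun k => by
    obtain ⟨b, hb, hkb⟩ := hZinf.exists_gt k
    exact ⟨b, hb, hkb⟩
  choose FZ hFZ1 hFZ2 using hch
  set z : ℕ → ℕ := fun k => Nat.rec (FZ 0) (fun _ prev => FZ (max prev (g prev))) k with hz
  have hzsucc : ∀ k, z (k + 1) = FZ (max (z k) (g (z k))) := fun k => rfl
  have hzmem : ∀ k, z k ∈ Z := by
    intro k; cases k with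
    | zero => exact hFZ1 0
    | succ k => rw [hzsucc]; exact hFZ1 _
  have hzmono : StrictMono z := strictMono_nat_of_lt_succ (fun k => by
    rw [hzsucc]
    exact lt_of_le_of_lt (le_max_left _ _) (hFZ2 _))
  have hzg : ∀ k, g (z k) < z (k + 1) := fun k => by
    rw [hzsucc]
    exact lt_of_le_of_lt (le_max_right _ _) (hFZ2 _)
  refine ⟨range z, infinite_range_of_injective hzmono.injective, ?_⟩
  -- Step 5: verify almost homogeneity
  intro c hc
  set cP : P := ⟨c, hc⟩ with hcP
  -- the limit color of c on Z
  have hunL := hZun {n | ℓ c n = true} ⟨cP, rfl⟩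
  rw [Splits, not_and_or, not_infinite, not_infinite] at hunL
  have hjN : ∃ (j : Bool) (N₁ : ℕ), ∀ n ∈ Z, N₁ ≤ n → ℓ c n = j := by
    rcases hunL with hfin | hfin
    · obtain ⟨N, hN⟩ := exists_bound hfin
      refine ⟨false, N, fun n hnZ hNn => ?_⟩
      cases h : ℓ c n
      · rfl
      · exact absurd (hN n ⟨h, hnZ⟩) (by omega)
    · obtain ⟨N, hN⟩ := exists_bound hfin
      refine ⟨true, N, fun n hnZ hNn => ?_⟩
      by_contra h
      have : ℓ c n ≠ true := h
      exact absurd (hN n ⟨hnZ, this⟩) (by omega)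
  obtain ⟨j, N₁, hjprop⟩ := hjN
  obtain ⟨N₂, hN₂⟩ := eventually_atTop.mp (hg (M cP) ⟨cP, rfl⟩)
  obtain ⟨N, hNN₁, hNN₂⟩ : ∃ N, N₁ ≤ N ∧ N₂ ≤ N :=
    ⟨max N₁ N₂, le_max_left _ _, le_max_right _ _⟩
  refine ⟨range z ∩ {x | x < N}, ((finite_Iio N).inter_of_right _), inter_subset_left, j, ?_⟩
  have key : ∀ a b : ℕ, a ∈ range z \ (range z ∩ {x | x < N}) →
      b ∈ range z \ (range z ∩ {x | x < N}) → a < b → c {a, b} = j := by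
    rintro a b ⟨⟨i, rfl⟩, haF⟩ ⟨⟨k, rfl⟩, hbF⟩ hab
    have haN : N ≤ z i := by
      by_contra h
      exact haF ⟨⟨i, rfl⟩, (by omega : z i < N)⟩
    have hik : i < k := hzmono.lt_iff_lt.mp hab
    have hMa : M cP (z i) < z k := by
      have h1 : M cP (z i) < g (z i) := hN₂ (z i) (le_trans hNN₂ haN)
      have h2 : g (z i) < z (i + 1) := hzg i
      have h3 : z (i + 1) ≤ z k := hzmono.monotone (show i + 1 ≤ k by omega)
      omega
    have hbY : z k ∈ Y := hZY (hzmem k)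
    have := hMprop cP (z i) (z k) (by omega) hbY (z i) le_rfl
    exact Eq.trans this (hjprop (z i) (hzmem i) (le_trans hNN₁ haN))
  intro a ha b hb hab
  rcases lt_trichotomy a b with h | h | h
  · exact key a b ha hb h
  · exact absurd h hab
  · rw [Finset.pair_comm]
    exact key b a hb ha h

theorem parNum_eq_min : parNum = min boundNum splitNum := by
  refine le_antisymm (le_min parNum_le_boundNum parNum_le_splitNum) ?_
  rw [parNum]
  refine le_csInf parSet_nonempty ?_
  rintro κ ⟨P, hnoH, rfl⟩
  by_contra h
  rw [not_le] at h
  exact hnoH (exists_common_almostHomog P (h.trans_le (min_le_left _ _))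
    (h.trans_le (min_le_right _ _)))
end

section
/- The homogeneity characteristic 𝐡𝐨𝐦 is at least the maximum of the unsplitting number 𝔯 and the dominating number 𝔡: max{𝔯, 𝔡} ≤ 𝐡𝐨𝐦. -/
open Cardinal Set Filter

/-- The homogeneity characteristic 𝐡𝐨𝐦. -/
noncomputable def homNum : Cardinal :=
  sInf {κ : Cardinal | ∃ ℋ : Set (Set ℕ), (∀ H ∈ ℋ, H.Infinite) ∧
    (∀ c : Finset ℕ → Bool, ∃ H ∈ ℋ, AlmostHomog2 c H) ∧ κ = #ℋ}

/-!
Every family witnessing `homNum` is both unsplittable and (after a uniform transformation)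
dominating. Given `X`, an almost homogeneous set for the colouring "both points lie on the same
side of `X`" is, up to finitely many points, inside `X` or inside its complement, so `X` does
not split it. Given `f`, colour `{a < b}` by whether `b` exceeds `max_{k ≤ a} f k`; an infinite
set cannot be homogeneous in the other colour, so consecutive points of an almost homogeneous
`H` eventually jump over `f`, and the second element of `H` above `n` majorizes `f n`.
The family of all infinite sets witnesses `homNum` by Ramsey's theorem, which we prove with a
nonprincipal ultrafilter.
-/

lemma Ultrafilter.exists_eventually_eq {α : Type*} (U : Ultrafilter α) (f : α → Bool) :
    ∃ i, ∀ᶠ a in (U : Filter α), f a = i := by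
  rcases U.eventually_or.mp (.of_forall fun a => Bool.eq_false_or_eq_true (f a)) with h | h
  exacts [⟨true, h⟩, ⟨false, h⟩]

lemma Filter.exists_strictMono_forall_lt_mem {l : Filter ℕ} [l.NeBot] (hl : l ≤ cofinite)
    {A : Set ℕ} (hA : A ∈ l) {B : ℕ → Set ℕ} (hB : ∀ a ∈ A, B a ∈ l) :
    ∃ x : ℕ → ℕ, StrictMono x ∧ (∀ n, x n ∈ A) ∧ ∀ m n, m < n → x n ∈ B (x m) := by
  choose! pick hpick using fun S (hS : S ∈ l) => l.nonempty_of_mem hS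
  let T : ℕ → Set ℕ := fun n => Nat.rec A (fun _ S => S ∩ B (pick S) ∩ Ioi (pick S)) n
  have hT : ∀ n, T n ∈ l ∧ T n ⊆ A := by
    intro n
    induction n with
    | zero => exact ⟨hA, subset_rfl⟩
    | succ n ih =>
      have hpickA : pick (T n) ∈ A := ih.2 (hpick _ ih.1)
      have hIoi : Ioi (pick (T n)) ∈ l := hl (Nat.cofinite_eq_atTop ▸ Ioi_mem_atTop _)
      exact ⟨inter_mem (inter_mem ih.1 (hB _ hpickA)) hIoi, fun a ha => ih.2 ha.1.1⟩
  have hanti : Antitone T := antitone_nat_of_succ_le fun n a ha => ha.1.1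
  have hstep : ∀ m n, m < n → pick (T n) ∈ T (m + 1) := fun m n hmn =>
    hanti (Nat.succ_le_of_lt hmn) (hpick _ (hT n).1)
  exact ⟨fun n => pick (T n), strictMono_nat_of_lt_succ fun n => (hstep n _ n.lt_succ_self).2,
    fun n => (hT n).2 (hpick _ (hT n).1), fun m n hmn => (hstep m n hmn).1.2⟩

theorem exists_infinite_homog2 (c : Finset ℕ → Bool) : ∃ H : Set ℕ, H.Infinite ∧ Homog2 c H := by
  let U := hyperfilter ℕ
  choose col hcol using fun a => U.exists_eventually_eq fun b => c {a, b}
  obtain ⟨i, hi⟩ := U.exists_eventually_eq col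
  obtain ⟨x, hx, -, hxB⟩ := exists_strictMono_forall_lt_mem hyperfilter_le_cofinite hi
    (B := fun a => {b | c {a, b} = i}) fun a (ha : col a = i) => ha ▸ hcol a
  refine ⟨range x, infinite_range_of_injective hx.injective, i, ?_⟩
  rintro _ ⟨m, rfl⟩ _ ⟨n, rfl⟩ hne
  rcases lt_or_gt_of_ne (ne_of_apply_ne x hne) with h | h
  · exact hxB m n h
  · rw [Finset.pair_comm]
    exact hxB n m h

lemma le_homNum {κ : Cardinal}
    (h : ∀ ℋ : Set (Set ℕ), (∀ H ∈ ℋ, H.Infinite) →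
      (∀ c : Finset ℕ → Bool, ∃ H ∈ ℋ, AlmostHomog2 c H) → κ ≤ #ℋ) :
    κ ≤ homNum := by
  refine le_csInf ⟨_, {H | H.Infinite}, fun H hH => hH, fun c => ?_, rfl⟩ ?_
  · obtain ⟨H, hH, hhom⟩ := exists_infinite_homog2 c
    exact ⟨H, hH, ∅, finite_empty, empty_subset H, by rwa [sdiff_empty]⟩
  · rintro _ ⟨ℋ, hinf, hhom, rfl⟩
    exact h ℋ hinf hhom

open Classical in
noncomputable def coloringOf (R : ℕ → ℕ → Prop) (s : Finset ℕ) : Bool :=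
  decide (∀ a ∈ s, ∀ b ∈ s, R a b)

lemma coloringOf_pair {R : ℕ → ℕ → Prop} (hR : ∀ a, R a a) (a b : ℕ) :
    coloringOf R {a, b} = true ↔ R a b ∧ R b a := by
  simp [coloringOf, hR]

lemma Homog2.rel_of_exists {R : ℕ → ℕ → Prop} (hR : ∀ a, R a a) {H : Set ℕ}
    (hH : Homog2 (coloringOf R) H) (hex : ∃ a ∈ H, ∃ b ∈ H, a ≠ b ∧ R a b ∧ R b a) :
    ∀ a ∈ H, ∀ b ∈ H, R a b := by
  obtain ⟨i, hi⟩ := hH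
  obtain ⟨a₀, ha₀, b₀, hb₀, hne, hR₀⟩ := hex
  have hi_true : i = true := hi a₀ ha₀ b₀ hb₀ hne ▸ (coloringOf_pair hR a₀ b₀).mpr hR₀
  intro a ha b hb
  rcases eq_or_ne a b with rfl | hab
  · exact hR a
  · exact ((coloringOf_pair hR a b).mp ((hi a ha b hb hab).trans hi_true)).1

lemma not_splits_of_almostHomog2 {X H : Set ℕ} (hH : H.Infinite)
    (h : AlmostHomog2 (coloringOf fun a b => a ∈ X ↔ b ∈ X) H) : ¬Splits X H := by
  obtain ⟨F, hF, -, hhom⟩ := h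
  have hH' : (H \ F).Infinite := hH.sdiff hF
  have hside : ∀ a ∈ H \ F, ∀ b ∈ H \ F, (a ∈ X ↔ b ∈ X) := by
    refine hhom.rel_of_exists (fun _ => Iff.rfl) ?_
    rw [← inter_union_sdiff (H \ F) X] at hH'
    rcases infinite_union.mp hH' with hin | hout
    · obtain ⟨a, ha, b, hb, hab⟩ := hin.nontrivial
      exact ⟨a, ha.1, b, hb.1, hab, iff_of_true ha.2 hb.2, iff_of_true hb.2 ha.2⟩
    · obtain ⟨a, ha, b, hb, hab⟩ := hout.nontrivial
      exact ⟨a, ha.1, b, hb.1, hab, iff_of_false ha.2 hb.2, iff_of_false hb.2 ha.2⟩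
  obtain ⟨a, ha⟩ := hH'.nonempty
  by_cases haX : a ∈ X
  · rintro ⟨-, hout⟩
    refine hout (hF.subset fun b hb => ?_)
    by_contra hbF
    exact hb.2 ((hside a ha b ⟨hb.1, hbF⟩).mp haX)
  · rintro ⟨hin, -⟩
    refine hin (hF.subset fun b hb => ?_)
    by_contra hbF
    exact haX ((hside a ha b ⟨hb.2, hbF⟩).mpr hb.1)

noncomputable def secondAbove (H : Set ℕ) (n : ℕ) : ℕ :=
  sInf {m ∈ H | ∃ a ∈ H, n < a ∧ a < m}

lemma secondAbove_spec {H : Set ℕ} (hH : H.Infinite) (n : ℕ) :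
    secondAbove H n ∈ H ∧ ∃ a ∈ H, n < a ∧ a < secondAbove H n := by
  obtain ⟨a, ha, hna⟩ := hH.exists_gt n
  obtain ⟨m, hm, ham⟩ := hH.exists_gt a
  exact Nat.sInf_mem (s := {m ∈ H | ∃ a ∈ H, n < a ∧ a < m}) ⟨m, hm, a, ha, hna, ham⟩

lemma evMaj_secondAbove {H F : Set ℕ} {f : ℕ → ℕ} (hf : Monotone f) (hH : H.Infinite)
    (hF : F.Finite) (hgap : ∀ a ∈ H \ F, ∀ b ∈ H \ F, a < b → f a < b) :
    EvMaj (secondAbove H) f := by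
  obtain ⟨N, hN⟩ := hF.bddAbove
  filter_upwards [eventually_ge_atTop N] with n hn
  obtain ⟨hg, a, ha, hna, hag⟩ := secondAbove_spec hH n
  have hnotin : ∀ m, n < m → m ∉ F := fun m hm hmF => (hN hmF).not_gt (hn.trans_lt hm)
  calc f n ≤ f a := hf hna.le
    _ < secondAbove H n := hgap a ⟨ha, hnotin a hna⟩ _ ⟨hg, hnotin _ (hna.trans hag)⟩ hag

lemma evMaj_secondAbove_of_almostHomog2 {f : ℕ → ℕ} {H : Set ℕ} (hH : H.Infinite)
    (h : AlmostHomog2 (coloringOf fun a b => a < b → partialSups f a < b) H) :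
    EvMaj (secondAbove H) f := by
  obtain ⟨F, hF, -, hhom⟩ := h
  obtain ⟨a, ha⟩ := (hH.sdiff hF).nonempty
  obtain ⟨b, hb, hab⟩ := (hH.sdiff hF).exists_gt (max a (partialSups f a))
  have hab' : a < b := (le_max_left _ _).trans_lt hab
  have hgap := hhom.rel_of_exists (fun a h => (lt_irrefl a h).elim)
    ⟨a, ha, b, hb, hab'.ne, fun _ => (le_max_right _ _).trans_lt hab,
      fun hba => (hab'.asymm hba).elim⟩
  exact (evMaj_secondAbove (partialSups f).monotone hH hF hgap).mono fun n hn =>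
    (le_partialSups f n).trans_lt hn

theorem max_le_homNum : max unsplitNum domNum ≤ homNum := by
  refine le_homNum fun ℋ hinf hhom => max_le ?_ ?_
  · refine csInf_le' ⟨ℋ, hinf, fun X => ?_, rfl⟩
    obtain ⟨H, hH, halm⟩ := hhom (coloringOf fun a b => a ∈ X ↔ b ∈ X)
    exact ⟨H, hH, not_splits_of_almostHomog2 (hinf H hH) halm⟩
  · calc domNum ≤ #(secondAbove '' ℋ) := csInf_le' ⟨_, fun f => ?_, rfl⟩
      _ ≤ #ℋ := mk_image_le
    obtain ⟨H, hH, halm⟩ := hhom (coloringOf fun a b => a < b → partialSups f a < b)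
    exact ⟨_, mem_image_of_mem _ hH, evMaj_secondAbove_of_almostHomog2 (hinf H hH) halm⟩
end
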